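/- arXiv:math/0507446 — 12 statements merged into one kernel-verified Lean document; each statement's English description precedes it below -/
import Mathlib

section
/- If P(T) = α²T² + βT + γ is a polynomial with integer coefficients, α a positive integer, and (tₙ) is a strictly increasing sequence of positive integers such that P(tₙ) is a perfect square for every n, then β² = 4α²γ, i.e., P is the square of a degree-one polynomial with rational coefficients. -/
theorem stmt_0 (α : ℕ) (hα : 0 < α) (β γ : ℤ) (t : ℕ → ℕ)
    (ht : StrictMono t) (htpos : ∀ n, 0 < t n)
    (hsq : ∀ n : ℕ, ∃ k : ℤ, (α : ℤ)^2 * (t n : ℤ)^2 + β * (t n : ℤ) + γ = k^2) :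
    β^2 = 4 * (α : ℤ)^2 * γ := by
  by_contra h
  set D : ℤ := 4 * (α : ℤ)^2 * γ - β^2 with hDdef
  have hD0 : D ≠ 0 := fun hh => h (by linarith [sub_eq_zero.mp hh])
  set n : ℕ := D.natAbs + β.natAbs + 1 with hn
  obtain ⟨k, hk⟩ := hsq n
  set T : ℤ := (t n : ℤ) with hT
  have hTn : (n : ℤ) ≤ T := by
    rw [hT]; exact_mod_cast ht.le_apply (x := n)
  have hTbig : |D| + |β| + 1 ≤ T := by
    have hcast : (n : ℤ) = |D| + |β| + 1 := by
      rw [hn]; push_cast [Int.natCast_natAbs]; ring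
    linarith [hTn]
  have hα1 : (1 : ℤ) ≤ (α : ℤ) := by exact_mod_cast hα
  have key : (2*(α:ℤ)*|k|)^2 - (2*(α:ℤ)^2*T + β)^2 = D := by
    have h1 : (2*(α:ℤ)*|k|)^2 = 4*(α:ℤ)^2*k^2 := by
      rw [mul_pow, mul_pow, sq_abs]; ring
    rw [h1, ← hk]; ring
  set u : ℤ := 2*(α:ℤ)*|k| - (2*(α:ℤ)^2*T + β) with hu
  set v : ℤ := 2*(α:ℤ)*|k| + (2*(α:ℤ)^2*T + β) with hv
  have hfac : u * v = D := by rw [hu, hv]; linear_combination key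
  have hu0 : u ≠ 0 := fun hh => hD0 (by rw [← hfac, hh, zero_mul])
  have hv0 : v ≠ 0 := fun hh => hD0 (by rw [← hfac, hh, mul_zero])
  have hub : |u| ≤ |D| := Int.le_of_dvd (abs_pos.mpr hD0)
    ((abs_dvd _ _).mpr ((dvd_abs _ _).mpr ⟨v, hfac.symm⟩))
  have hvb : |v| ≤ |D| := Int.le_of_dvd (abs_pos.mpr hD0)
    ((abs_dvd _ _).mpr ((dvd_abs _ _).mpr ⟨u, by rw [← hfac]; ring⟩))
  have ha : 2 * (2*(α:ℤ)^2*T + β) = v - u := by rw [hu, hv]; ring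
  have h1 : |u| ≥ u ∧ |u| ≥ -u := ⟨le_abs_self u, neg_le_abs u⟩
  have h2 : |v| ≥ v ∧ |v| ≥ -v := ⟨le_abs_self v, neg_le_abs v⟩
  have hβ : -|β| ≤ β := neg_abs_le β
  have hTpos : (0:ℤ) ≤ T := by linarith [abs_nonneg D, abs_nonneg β]
  have hα2 : (1:ℤ) ≤ (α:ℤ)^2 := by nlinarith
  have hT2 : 2*(α:ℤ)^2*T ≥ 2*T := by nlinarith [mul_le_mul_of_nonneg_right hα2 hTpos]
  linarith
end

section
/- Let A and B be n×n complex matrices. If exp(t(A+B)) = exp(tA)·exp(tB) holds for all t in an open neighborhood of 0 in ℂ (equivalently, all real t), then AB = BA. -/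
/-!
Differentiating `exp (t • (a + b)) = exp (t • a) * exp (t • b)` in `t` and cancelling the unit
`exp (t • a)` shows that `a` commutes with every `exp (t • b)`; differentiating that relation at
`t = 0` gives `a * b = b * a`.
-/

open Matrix NormedSpace

section ExpSmul

variable {𝕂 𝔸 : Type*} [RCLike 𝕂] [NormedRing 𝔸] [NormedAlgebra 𝕂 𝔸] [CompleteSpace 𝔸]

theorem commute_of_forall_commute_exp_smul {a b : 𝔸} (h : ∀ t : 𝕂, Commute a (exp (t • b))) :
    Commute a b := by
  have hleft := (hasDerivAt_exp_smul_const' (𝕂 := 𝕂) b 0).const_mul a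
  have hright := (hasDerivAt_exp_smul_const' (𝕂 := 𝕂) b 0).mul_const a
  rw [show (fun t : 𝕂 => exp (t • b) * a) = fun t => a * exp (t • b) from
    funext fun t => (h t).symm.eq] at hright
  rw [commute_iff_eq]
  simpa only [zero_smul, exp_zero, mul_one, ← mul_assoc] using hleft.unique hright

theorem commute_exp_smul_of_forall_exp_smul_add_eq_mul {a b : 𝔸}
    (h : ∀ t : 𝕂, exp (t • (a + b)) = exp (t • a) * exp (t • b)) (t : 𝕂) :
    Commute a (exp (t • b)) := by
  have hsum : HasDerivAt (fun s : 𝕂 => exp (s • a) * exp (s • b))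
      (exp (t • a) * exp (t • b) * (a + b)) t := by
    simpa only [← h] using hasDerivAt_exp_smul_const (𝕂 := 𝕂) (a + b) t
  have hprod := (hasDerivAt_exp_smul_const (𝕂 := 𝕂) a t).mul
    (hasDerivAt_exp_smul_const (𝕂 := 𝕂) b t)
  have hderiv : exp (t • a) * exp (t • b) * a + exp (t • a) * exp (t • b) * b
      = exp (t • a) * a * exp (t • b) + exp (t • a) * exp (t • b) * b := by
    rw [← mul_add, hsum.unique hprod, mul_assoc (exp (t • a)) (exp (t • b)) b]
  have hunit : IsUnit (exp (t • a)) := isUnit_exp_of_mem_ball (𝕂 := 𝕂)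
    ((expSeries_radius_eq_top 𝕂 𝔸).symm ▸ edist_lt_top _ _)
  refine hunit.mul_left_cancel ?_
  simpa only [mul_assoc] using (add_right_cancel hderiv).symm

end ExpSmul

theorem stmt_1 {n : ℕ} (A B : Matrix (Fin n) (Fin n) ℂ)
    (h : ∀ t : ℝ, exp ((t : ℂ) • (A + B)) = exp ((t : ℂ) • A) * exp ((t : ℂ) • B)) :
    A * B = B * A := by
  simp only [Complex.coe_smul] at h
  open scoped Matrix.Norms.Operator in
  exact commute_of_forall_commute_exp_smul (commute_exp_smul_of_forall_exp_smul_add_eq_mul h)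
end

section
/- Let f be an n×n complex matrix whose spectrum is 2iπ-congruence free (no two eigenvalues differ by a nonzero integer multiple of 2πi). Then exp(f) can be written as a polynomial in f, and conversely f is a polynomial in exp(f); in particular any matrix commuting with exp(f) commutes with f. -/
open Matrix NormedSpace Complex Polynomial

/-!
`exp x` is a limit of polynomials in `x`, so it lies in the finite-dimensional, hence closed,
subalgebra `ℂ[x]`: `exp x = g(x)`. Evaluating this on elements `e` with `(x - a)² e = 0` gives
`g(a) = eᵃ` at every root `a` of the minimal polynomial `m` of `x`, and `g'(a) = eᵃ ≠ 0` at its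
multiple roots. The hypothesis makes `g` injective on the roots of `m`, so Newton lifting at each
root and the Chinese remainder theorem give `q` with `q ∘ g ≡ X mod m`, that is `x = q(exp x)`.
-/

theorem IsIntegral.exp_mem_adjoin {𝕜 A : Type*} [NontriviallyNormedField 𝕜] [CompleteSpace 𝕜]
    [CharZero 𝕜] [Ring A] [Algebra 𝕜 A] [TopologicalSpace A] [IsTopologicalRing A]
    [ContinuousSMul 𝕜 A] [T2Space A] {x : A} (hx : IsIntegral 𝕜 x) :
    exp x ∈ Algebra.adjoin 𝕜 {x} := by
  have : FiniteDimensional 𝕜 (Subalgebra.toSubmodule (Algebra.adjoin 𝕜 {x})) :=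
    Module.Finite.iff_fg.mpr hx.fg_adjoin_singleton
  rw [exp_eq_tsum 𝕜]
  refine tsum_mem (Submodule.closed_of_finiteDimensional
    (Subalgebra.toSubmodule (Algebra.adjoin 𝕜 {x}))) fun n => ?_
  exact Subalgebra.smul_mem _ (Subalgebra.pow_mem _ (Algebra.self_mem_adjoin_singleton 𝕜 x) n) _

theorem Polynomial.aeval_mul_of_sq_mul_eq_zero {R A : Type*} [CommRing R] [Ring A]
    [Algebra R A] (p : R[X]) {x e : A} {a : R} (h : (x - algebraMap R A a) ^ 2 * e = 0) :
    aeval x p * e = p.eval a • e + p.derivative.eval a • ((x - algebraMap R A a) * e) := by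
  set N := x - algebraMap R A a
  have hx : aeval x p = aeval N (taylor a p) := by
    rw [taylor_apply, aeval_comp]
    simp [N]
  have hvanish : ∀ i, N ^ (i + 1 + 1) * e = 0 := fun i => by
    rw [add_assoc, pow_add, mul_assoc, h, mul_zero]
  rw [hx, aeval_eq_sum_range' (n := (taylor a p).natDegree + 2) (by omega), Finset.sum_mul,
    Finset.sum_range_succ', Finset.sum_range_succ']
  simp only [smul_mul_assoc, hvanish, smul_zero, Finset.sum_const_zero, zero_add, pow_one,
    pow_zero, one_mul, taylor_coeff_zero, taylor_coeff_one]
  exact add_comm _ _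

theorem NormedSpace.exp_mul_of_sq_mul_eq_zero {𝕂 A : Type*} [RCLike 𝕂] [NormedRing A]
    [NormedAlgebra 𝕂 A] [CompleteSpace A] {x e : A} {a : 𝕂}
    (h : (x - algebraMap 𝕂 A a) ^ 2 * e = 0) :
    exp x * e = exp a • (e + (x - algebraMap 𝕂 A a) * e) := by
  set N := x - algebraMap 𝕂 A a
  have hN : exp N * e = e + N * e := by
    have hfin : HasSum (fun i => ((Nat.factorial i : 𝕂)⁻¹ • N ^ i) * e)
        (∑ i ∈ Finset.range 2, ((Nat.factorial i : 𝕂)⁻¹ • N ^ i) * e) :=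
      hasSum_sum_of_ne_finset_zero fun i hi => by
        obtain ⟨i, rfl⟩ : ∃ j, i = j + 2 := ⟨i - 2, by simp at hi; omega⟩
        rw [smul_mul_assoc, pow_add, mul_assoc, h, mul_zero, smul_zero]
    refine ((exp_series_hasSum_exp' (𝕂 := 𝕂) N).mul_right e).unique ?_
    simpa [Finset.sum_range_succ] using hfin
  let : NormedAlgebra ℚ A := .restrictScalars ℚ 𝕂 A
  rw [show x = algebraMap 𝕂 A a + N by simp [N], exp_add_of_commute (Algebra.commutes a N),
    ← algebraMap_exp_comm, mul_assoc, hN, ← Algebra.smul_def]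

theorem spectrum.mem_of_mul_eq_zero {K A : Type*} [CommRing K] [Ring A] [Algebra K A]
    {x e : A} {a : K} (he : e ≠ 0) (h : (x - algebraMap K A a) * e = 0) : a ∈ spectrum K x := by
  rw [spectrum.mem_iff, ← IsUnit.neg_iff, neg_sub]
  exact fun hu => he (hu.mul_right_eq_zero.mp h)

theorem minpoly.exists_mul_ne_zero_of_pow_dvd {K A : Type*} [Field K] [Ring A] [Algebra K A]
    {x : A} (hx : IsIntegral K x) {a : K} {k : ℕ} (h : (X - C a) ^ (k + 1) ∣ minpoly K x) :
    ∃ e : A, (x - algebraMap K A a) ^ k * e ≠ 0 ∧ (x - algebraMap K A a) ^ (k + 1) * e = 0 := by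
  obtain ⟨r, hr⟩ := h
  have hr_monic : r.Monic :=
    ((monic_X_sub_C a).pow _).of_mul_monic_left (hr ▸ minpoly.monic hx)
  have hmonic : ((X - C a) ^ k * r).Monic := ((monic_X_sub_C a).pow k).mul hr_monic
  refine ⟨Polynomial.aeval x r, ?_, ?_⟩
  · simpa using minpoly.aeval_ne_zero_of_dvdNotUnit_minpoly hx hmonic
      ⟨hmonic.ne_zero, X - C a, not_isUnit_X_sub_C a, by rw [hr]; ring⟩
  · have := minpoly.aeval K x
    rw [hr] at this
    simpa using this

section BanachAlgebra

variable {𝕂 A : Type*} [RCLike 𝕂] [NormedRing A] [NormedAlgebra 𝕂 A] [CompleteSpace A]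
  {x e : A} {g : 𝕂[X]} {a : 𝕂}

theorem Polynomial.eval_eq_exp_of_aeval_eq_exp (hg : aeval x g = exp x) (he : e ≠ 0)
    (h : (x - algebraMap 𝕂 A a) * e = 0) : g.eval a = exp a := by
  have h2 : (x - algebraMap 𝕂 A a) ^ 2 * e = 0 := by rw [sq, mul_assoc, h, mul_zero]
  have := aeval_mul_of_sq_mul_eq_zero g h2
  rw [hg, exp_mul_of_sq_mul_eq_zero h2, h, smul_zero, add_zero, add_zero] at this
  exact smul_left_injective 𝕂 he this.symm

theorem Polynomial.derivative_eval_eq_exp_of_aeval_eq_exp (hg : aeval x g = exp x)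
    (he : (x - algebraMap 𝕂 A a) * e ≠ 0) (h : (x - algebraMap 𝕂 A a) ^ 2 * e = 0) :
    g.derivative.eval a = exp a := by
  have hga := eval_eq_exp_of_aeval_eq_exp hg he (by rw [← mul_assoc, ← sq, h])
  have := aeval_mul_of_sq_mul_eq_zero g h
  rw [hg, exp_mul_of_sq_mul_eq_zero h, hga, smul_add] at this
  exact smul_left_injective 𝕂 he (add_left_cancel this).symm

end BanachAlgebra

theorem Polynomial.exists_comp_sub_X_dvd_pow {K : Type*} [Field K] (g : K[X]) (a : K) (μ : ℕ)
    (hg : 1 < μ → g.derivative.eval a ≠ 0) : ∃ R : K[X], (X - C a) ^ μ ∣ R.comp g - X := by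
  induction μ with
  | zero => exact ⟨0, by simp⟩
  | succ μ ih =>
    obtain ⟨R, h, hR⟩ := ih fun hμ => hg (by omega)
    obtain ⟨g₁, hg₁⟩ : X - C a ∣ g - C (g.eval a) := dvd_iff_isRoot.mpr (by simp)
    have hg₁a : g₁.eval a = g.derivative.eval a := by
      simpa using congrArg (fun p => p.derivative.eval a) hg₁.symm
    have hpow : g₁.eval a ^ μ ≠ 0 := by
      rcases Nat.eq_zero_or_pos μ with rfl | hμ
      · simp
      · exact pow_ne_zero _ (hg₁a ▸ hg (by omega))
    -- Newton step: `(X - C (g a)) ^ μ` composes to `(X - C a) ^ μ * g₁ ^ μ`, and `g₁ a ≠ 0`.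
    set c := -h.eval a / g₁.eval a ^ μ
    have hcomp : (R + C c * (X - C (g.eval a)) ^ μ).comp g - X
        = (X - C a) ^ μ * (h + C c * g₁ ^ μ) := by
      simp only [add_comp, mul_comp, pow_comp, sub_comp, C_comp, X_comp]
      rw [hg₁, mul_pow]
      linear_combination hR
    obtain ⟨w, hw⟩ : X - C a ∣ h + C c * g₁ ^ μ :=
      dvd_iff_isRoot.mpr (by simp [c, div_mul_cancel₀ _ hpow])
    exact ⟨_, w, by rw [hcomp, hw]; ring⟩

theorem Polynomial.dvd_of_forall_pow_rootMultiplicity_dvd {K : Type*} [Field K] {p q : K[X]}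
    (hp : p.Splits) (hp0 : p ≠ 0) (h : ∀ a, (X - C a) ^ p.rootMultiplicity a ∣ q) : p ∣ q := by
  classical
  rcases eq_or_ne q 0 with rfl | hq0
  · exact dvd_zero p
  refine hp.dvd_of_roots_le_roots hp0 (Multiset.le_iff_count.mpr fun a => ?_)
  rw [count_roots, count_roots]
  exact (le_rootMultiplicity_iff hq0).mpr (h a)

theorem Polynomial.exists_comp_sub_X_dvd {K : Type*} [Field K] {m g : K[X]} (hm : m.Splits)
    (hm0 : m ≠ 0) (hinj : ∀ a b, m.IsRoot a → m.IsRoot b → g.eval a = g.eval b → a = b)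
    (hder : ∀ a, 1 < m.rootMultiplicity a → g.derivative.eval a ≠ 0) :
    ∃ q : K[X], m ∣ q.comp g - X := by
  classical
  let μ a := m.rootMultiplicity a
  choose R hR using fun a => exists_comp_sub_X_dvd_pow g a (μ a) (hder a)
  let I : m.roots.toFinset → Ideal K[X] := fun a => Ideal.span {(X - C (g.eval ↑a)) ^ μ ↑a}
  have hI : Pairwise (Function.onFun IsCoprime I) := fun a b hab => by
    have ha := (mem_roots hm0).mp (Multiset.mem_toFinset.mp a.2)
    have hb := (mem_roots hm0).mp (Multiset.mem_toFinset.mp b.2)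
    have hne : g.eval ↑a ≠ g.eval ↑b := fun h => hab (Subtype.ext (hinj a b ha hb h))
    exact (Ideal.isCoprime_span_singleton_iff _ _).mpr
      (pairwise_coprime_X_sub_C Function.injective_id hne).pow
  obtain ⟨q, hq⟩ := Ideal.exists_forall_sub_mem_ideal hI fun a => R a
  refine ⟨q, dvd_of_forall_pow_rootMultiplicity_dvd hm hm0 fun a => ?_⟩
  by_cases ha : m.IsRoot a
  · have hqR : (X - C (g.eval a)) ^ μ a ∣ q - R a :=
      Ideal.mem_span_singleton.mp (hq ⟨a, Multiset.mem_toFinset.mpr ((mem_roots hm0).mpr ha)⟩)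
    have hcomp : (X - C a) ^ μ a ∣ (q - R a).comp g :=
      calc (X - C a) ^ μ a ∣ ((X - C (g.eval a)) ^ μ a).comp g := by
            rw [pow_comp]
            exact pow_dvd_pow_of_dvd (dvd_iff_isRoot.mpr (by simp)) _
        _ ∣ (q - R a).comp g := by
            simpa only [coe_compRingHom_apply] using _root_.map_dvd (compRingHom g) hqR
    rw [show q.comp g - X = (q - R a).comp g + ((R a).comp g - X) by simp [sub_comp]]
    exact dvd_add hcomp (hR a)
  · simp [rootMultiplicity_eq_zero ha]

theorem Complex.injOn_exp_of_sub_ne {S : Set ℂ}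
    (h : ∀ u ∈ S, ∀ v ∈ S, ∀ k : ℤ, k ≠ 0 → u - v ≠ 2 * Real.pi * I * k) : S.InjOn cexp := by
  intro u hu v hv huv
  obtain ⟨k, hk⟩ := Complex.exp_eq_exp_iff_exists_int.mp huv
  by_contra hne
  exact h u hu v hv k (by rintro rfl; simp [hk] at hne) (by rw [hk]; ring)

theorem IsIntegral.mem_adjoin_exp {A : Type*} [NormedRing A] [NormedAlgebra ℂ A]
    [CompleteSpace A] {x : A} (hx : IsIntegral ℂ x) (hinj : (spectrum ℂ x).InjOn cexp) :
    x ∈ Algebra.adjoin ℂ {exp x} := by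
  obtain ⟨g, hg⟩ : ∃ g : ℂ[X], aeval x g = exp x := by
    simpa [Algebra.adjoin_singleton_eq_range_aeval] using hx.exp_mem_adjoin
  have hroot : ∀ a, (minpoly ℂ x).IsRoot a → a ∈ spectrum ℂ x ∧ g.eval a = cexp a := by
    intro a ha
    obtain ⟨e, he, h⟩ := minpoly.exists_mul_ne_zero_of_pow_dvd hx (k := 0)
      (by simpa using dvd_iff_isRoot.mpr ha)
    rw [pow_zero, one_mul] at he
    rw [pow_one] at h
    rw [Complex.exp_eq_exp_ℂ]
    exact ⟨spectrum.mem_of_mul_eq_zero he h, eval_eq_exp_of_aeval_eq_exp hg he h⟩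
  have hder : ∀ a, 1 < (minpoly ℂ x).rootMultiplicity a → g.derivative.eval a ≠ 0 := by
    intro a ha
    obtain ⟨e, he, h⟩ := minpoly.exists_mul_ne_zero_of_pow_dvd hx (k := 1)
      ((le_rootMultiplicity_iff (minpoly.ne_zero hx)).mp ha)
    rw [pow_one] at he
    rw [derivative_eval_eq_exp_of_aeval_eq_exp hg he h, ← Complex.exp_eq_exp_ℂ]
    exact Complex.exp_ne_zero a
  obtain ⟨q, hq⟩ := exists_comp_sub_X_dvd (IsAlgClosed.splits _) (minpoly.ne_zero hx)
    (fun a b ha hb hab => hinj (hroot a ha).1 (hroot b hb).1 <| by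
      rwa [(hroot a ha).2, (hroot b hb).2] at hab) hder
  rw [Algebra.adjoin_singleton_eq_range_aeval]
  refine ⟨q, ?_⟩
  have := minpoly.dvd_iff.mp hq
  rwa [map_sub, aeval_comp, hg, aeval_X, sub_eq_zero] at this

theorem stmt_3 {n : ℕ} (f : Matrix (Fin n) (Fin n) ℂ)
    (hfree : ∀ u ∈ spectrum ℂ f, ∀ v ∈ spectrum ℂ f,
      ∀ k : ℤ, k ≠ 0 → u - v ≠ 2 * Real.pi * I * k) :
    (∃ p : ℂ[X], NormedSpace.exp f = aeval f p) ∧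
    (∃ q : ℂ[X], f = aeval (NormedSpace.exp f) q) ∧
    (∀ M : Matrix (Fin n) (Fin n) ℂ, M * NormedSpace.exp f = NormedSpace.exp f * M → M * f = f * M) := by
  -- `exp` only depends on the topology, which this Banach algebra norm induces.
  let := Matrix.linftyOpNormedRing (n := Fin n) (α := ℂ)
  let := Matrix.linftyOpNormedAlgebra (n := Fin n) (α := ℂ) (R := ℂ)
  have hf : IsIntegral ℂ f := Algebra.IsIntegral.isIntegral f
  have hexp := hf.exp_mem_adjoin
  have hlog := hf.mem_adjoin_exp (Complex.injOn_exp_of_sub_ne hfree)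
  refine ⟨?_, ?_, fun M hM => Algebra.commute_of_mem_adjoin_singleton_of_commute hlog hM⟩
  · simpa [Algebra.adjoin_singleton_eq_range_aeval, eq_comm] using hexp
  · rw [Algebra.adjoin_singleton_eq_range_aeval] at hlog
    obtain ⟨q, hq⟩ := hlog
    exact ⟨q, hq.symm⟩
end

section
/- Let f, g be n×n complex matrices whose spectra are both 2iπ-congruence free. If exp(f)·exp(g) = exp(g)·exp(f), then fg = gf. -/
/-!
Let `T = ad f` act on matrices. Then `exp T` is conjugation by `exp f`, so a matrix `X` commuting
with `exp f` is a fixed point of `exp T`. Since `exp T - 1 = T ∘ exprel T`, where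
`exprel z = (exp z - 1) / z`, it suffices that `exprel T` is injective. An eigenvector of `T` in
its kernel would have an eigenvalue `μ` with `exprel μ = 0`, i.e. `μ ∈ 2πiℤ \ {0}`; but by a
Sylvester-type argument every eigenvalue of `ad f` is a difference `u - v` of eigenvalues of `f`,
and these avoid `2πiℤ \ {0}` by hypothesis. Hence `f` commutes with `exp g`, and by the same
argument for `g`, `g` commutes with `f`.
-/

open Matrix NormedSpace Complex

open scoped Nat

section Exprel

variable {𝕜 𝔸 : Type*} [RCLike 𝕜] [NormedRing 𝔸] [NormedAlgebra 𝕜 𝔸]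

variable (𝕜) in
/-- The power series of the entire function `(exp z - 1) / z`. -/
noncomputable def exprel (a : 𝔸) : 𝔸 :=
  ∑' n : ℕ, ((n + 1)!⁻¹ : 𝕜) • a ^ n

lemma commute_exprel (a : 𝔸) : Commute a (exprel 𝕜 a) :=
  .tsum_right a fun n => ((Commute.refl a).pow_right n).smul_right _

lemma exprel_zero : exprel 𝕜 (0 : 𝔸) = 1 := by
  rw [exprel, tsum_eq_single 0 fun n hn => by simp [zero_pow hn]]
  simp

variable [CompleteSpace 𝔸]

lemma summable_exprel (a : 𝔸) : Summable fun n : ℕ => ((n + 1)!⁻¹ : 𝕜) • a ^ n := by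
  refine .of_norm_bounded (norm_expSeries_summable' (𝕂 := 𝕜) a) fun n => ?_
  simp only [norm_smul, norm_inv, RCLike.norm_natCast]
  gcongr
  exact n.le_succ

lemma exp_sub_one_eq_mul_exprel (a : 𝔸) : exp a - 1 = a * exprel 𝕜 a := by
  rw [congrFun (exp_eq_tsum 𝕜) a, (expSeries_summable' (𝕂 := 𝕜) a).tsum_eq_zero_add, exprel,
    ← (summable_exprel a).tsum_mul_left]
  simp [pow_succ']

lemma exprel_apply_of_apply_eq_smul {E : Type*} [NormedAddCommGroup E] [NormedSpace 𝕜 E]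
    [CompleteSpace E] (T : E →L[𝕜] E) {μ : 𝕜} {v : E} (hv : T v = μ • v) :
    exprel 𝕜 T v = exprel 𝕜 μ • v := by
  have hpow (n : ℕ) : (T ^ n) v = μ ^ n • v := by
    induction n with
    | zero => simp
    | succ n ih => rw [pow_succ', mul_apply_eq_comp, ih, map_smul, hv, smul_smul, pow_succ]
  rw [exprel, exprel, ← ContinuousLinearMap.apply_apply (v := v),
    ContinuousLinearMap.map_tsum _ (summable_exprel T), ← (summable_exprel μ).tsum_smul_const]
  simp [hpow, smul_smul]

end Exprel

theorem ContinuousLinearMap.apply_eq_zero_of_exp_apply_eq_self {E : Type*} [NormedAddCommGroup E]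
    [NormedSpace ℂ E] [FiniteDimensional ℂ E] (T : E →L[ℂ] E)
    (hT : ∀ μ, Module.End.HasEigenvalue (T : Module.End ℂ E) μ → Complex.exp μ = 1 → μ = 0)
    {x : E} (hx : exp T x = x) : T x = 0 := by
  have := FiniteDimensional.complete ℂ E
  have hS (y : E) : exprel ℂ T (T y) = T (exprel ℂ T y) := by
    rw [← mul_apply_eq_comp, ← mul_apply_eq_comp, (commute_exprel T).eq]
  have hSTx : exprel ℂ T (T x) = 0 := by
    have := congrArg (· x) (exp_sub_one_eq_mul_exprel (𝕜 := ℂ) T)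
    simpa [hx, mul_apply_eq_comp, (commute_exprel T).eq] using this.symm
  by_contra hTx
  let K := LinearMap.ker ((exprel ℂ T : E →L[ℂ] E) : E →ₗ[ℂ] E)
  have hK : ∀ y ∈ K, T y ∈ K := fun y (hy : exprel ℂ T y = 0) =>
    show exprel ℂ T (T y) = 0 by rw [hS, hy, map_zero]
  have : Nontrivial K := Submodule.nontrivial_iff_ne_bot.2 <|
    (Submodule.ne_bot_iff K).2 ⟨T x, hSTx, hTx⟩
  obtain ⟨μ, hμ⟩ := Module.End.exists_eigenvalue ((T : E →ₗ[ℂ] E).restrict hK)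
  obtain ⟨v, hv⟩ := hμ.exists_hasEigenvector
  have hTv : T v = μ • (v : E) := congrArg Subtype.val hv.apply_eq_smul
  have hv0 : (v : E) ≠ 0 := by simpa using hv.2
  have hexprel : exprel ℂ μ = 0 := by
    have := exprel_apply_of_apply_eq_smul T hTv
    rw [show exprel ℂ T v = 0 from v.2, eq_comm, smul_eq_zero] at this
    exact this.resolve_right hv0
  have hexp : Complex.exp μ = 1 := by
    rw [Complex.exp_eq_exp_ℂ, ← sub_eq_zero, exp_sub_one_eq_mul_exprel (𝕜 := ℂ), hexprel, mul_zero]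
  have hμ0 := hT μ (Module.End.hasEigenvalue_of_hasEigenvector
    ⟨Module.End.mem_eigenspace_iff.2 hTv, hv0⟩) hexp
  rw [hμ0, exprel_zero] at hexprel
  exact one_ne_zero hexprel

section Ad

variable {𝕜 𝔸 : Type*} [RCLike 𝕜] [NormedRing 𝔸] [NormedAlgebra 𝕜 𝔸]

theorem ContinuousLinearMap.map_exp_of_map_pow {𝔹 : Type*} [NormedRing 𝔹] [NormedAlgebra 𝕜 𝔹]
    [CompleteSpace 𝔸] (Φ : 𝔸 →L[𝕜] 𝔹) {a : 𝔸} (h : ∀ n : ℕ, Φ (a ^ n) = Φ a ^ n) :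
    Φ (exp a) = exp (Φ a) := by
  rw [congrFun (exp_eq_tsum 𝕜) a, congrFun (exp_eq_tsum 𝕜) (Φ a),
    Φ.map_tsum (expSeries_summable' a)]
  simp [h]

variable (𝕜) in
noncomputable def adCLM (a : 𝔸) : 𝔸 →L[𝕜] 𝔸 :=
  ContinuousLinearMap.mul 𝕜 𝔸 a - (ContinuousLinearMap.mul 𝕜 𝔸).flip a

@[simp] lemma adCLM_apply (a b : 𝔸) : adCLM 𝕜 a b = a * b - b * a := rfl

lemma exp_adCLM_apply [CompleteSpace 𝔸] (a b : 𝔸) :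
    exp (adCLM 𝕜 a) b = exp a * b * exp (-a) := by
  let L := ContinuousLinearMap.mul 𝕜 𝔸
  let R := (ContinuousLinearMap.mul 𝕜 𝔸).flip
  have hL : exp (L a) = L (exp a) := (L.map_exp_of_map_pow fun n => by
    induction n with
    | zero => ext; simp [L]
    | succ n ih => rw [pow_succ, pow_succ, ← ih]; ext; simp [L, mul_assoc]).symm
  have hR : exp (R (-a)) = R (exp (-a)) := (R.map_exp_of_map_pow fun n => by
    induction n with
    | zero => ext; simp [R]
    | succ n ih => rw [pow_succ', pow_succ, ← ih]; ext; simp [R, mul_assoc]).symm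
  have hLR : Commute (L a) (R (-a)) := by ext; simp [L, R, mul_assoc]
  let := NormedAlgebra.restrictScalars ℚ 𝕜 (𝔸 →L[𝕜] 𝔸)
  have hsplit : adCLM 𝕜 a = L a + R (-a) := by simp [adCLM, L, R, sub_eq_add_neg]
  rw [hsplit, exp_add_of_commute hLR, hL, hR]
  simp [L, R, mul_assoc]

end Ad

open Polynomial in
theorem Polynomial.aeval_mul_eq_mul_aeval {R A : Type*} [CommSemiring R] [Semiring A]
    [Algebra R A] {a b x : A} (h : a * x = x * b) (q : R[X]) :
    aeval a q * x = x * aeval b q := by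
  induction q using Polynomial.induction_on' with
  | add p q hp hq => rw [map_add, map_add, add_mul, mul_add, hp, hq]
  | monomial n c =>
    have hn : x * b ^ n = a ^ n * x := SemiconjBy.pow_right h.symm n
    rw [aeval_monomial, aeval_monomial, mul_assoc, ← hn, ← mul_assoc, Algebra.commutes, mul_assoc]

open Polynomial in
theorem Matrix.exists_mem_spectrum_of_mul_eq_mul {m K : Type*} [Fintype m] [DecidableEq m]
    [Field K] [IsAlgClosed K] {A B X : Matrix m m K} (hX : X ≠ 0) (h : A * X = X * B) :
    ∃ μ ∈ spectrum K A, μ ∈ spectrum K B := by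
  have : Nonempty m := by
    by_contra hm
    rw [not_nonempty_iff] at hm
    exact hX (Subsingleton.elim _ _)
  have hq : aeval A B.charpoly * X = 0 := by
    rw [aeval_mul_eq_mul_aeval h, aeval_self_charpoly, mul_zero]
  have hu : ¬IsUnit (aeval A B.charpoly) := fun hu => hX (hu.mul_right_eq_zero.1 hq)
  rw [← spectrum.zero_mem_iff K, spectrum.map_polynomial_aeval_of_degree_pos _ _
    (by rw [charpoly_degree_eq_dim]; exact_mod_cast Fintype.card_pos)] at hu
  obtain ⟨μ, hμ, h0⟩ := hu
  exact ⟨μ, hμ, mem_spectrum_iff_isRoot_charpoly.2 h0⟩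

section MatrixAd

open scoped Norms.Operator

variable {m : Type*} [Fintype m] [DecidableEq m]

theorem Matrix.exists_eq_sub_of_hasEigenvalue_adCLM {A : Matrix m m ℂ} {μ : ℂ}
    (hμ : Module.End.HasEigenvalue (adCLM ℂ A : Module.End ℂ (Matrix m m ℂ)) μ) :
    ∃ u ∈ spectrum ℂ A, ∃ v ∈ spectrum ℂ A, μ = u - v := by
  obtain ⟨X, hX⟩ := hμ.exists_hasEigenvector
  have hAX : A * X = X * (algebraMap ℂ _ μ + A) := by
    have hcomm : A * X - X * A = μ • X := by
      simpa using Module.End.mem_eigenspace_iff.1 hX.1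
    rw [mul_add, ← Algebra.commutes, ← Algebra.smul_def, ← hcomm, sub_add_cancel]
  obtain ⟨u, hu, hu'⟩ := exists_mem_spectrum_of_mul_eq_mul hX.2 hAX
  rw [← spectrum.singleton_add_eq] at hu'
  obtain ⟨_, rfl, v, hv, rfl⟩ := hu'
  exact ⟨_, hu, v, hv, (add_sub_cancel_right _ _).symm⟩

theorem Matrix.commute_of_commute_exp {A X : Matrix m m ℂ}
    (hA : Set.InjOn Complex.exp (spectrum ℂ A)) (h : Commute (exp A) X) : Commute A X := by
  have hconj : exp A * X * exp (-A) = X := by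
    rw [h.eq, mul_assoc, ← Matrix.exp_add_of_commute _ _ (Commute.refl A).neg_right,
      add_neg_cancel, NormedSpace.exp_zero, mul_one]
  have hfix : exp (adCLM ℂ A) X = X := (exp_adCLM_apply A X).trans hconj
  have hadX := ContinuousLinearMap.apply_eq_zero_of_exp_apply_eq_self (adCLM ℂ A)
    (fun μ hμ hexp => ?_) hfix
  · exact sub_eq_zero.1 hadX
  · obtain ⟨u, hu, v, hv, rfl⟩ := exists_eq_sub_of_hasEigenvalue_adCLM hμ
    rw [Complex.exp_sub, div_eq_one_iff_eq (Complex.exp_ne_zero _)] at hexp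
    rw [hA hu hv hexp, sub_self]

end MatrixAd

theorem Complex.injOn_exp_of_forall_sub_ne {s : Set ℂ}
    (hs : ∀ u ∈ s, ∀ v ∈ s, ∀ k : ℤ, k ≠ 0 → u - v ≠ 2 * Real.pi * I * k) :
    Set.InjOn Complex.exp s := by
  intro u hu v hv huv
  obtain ⟨k, hk⟩ := Complex.exp_eq_exp_iff_exists_int.1 huv
  by_contra hne
  refine hs u hu v hv k (by rintro rfl; simp [hk] at hne) ?_
  rw [hk]
  ring

theorem stmt_4 {n : ℕ} (f g : Matrix (Fin n) (Fin n) ℂ)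
    (hf : ∀ u ∈ spectrum ℂ f, ∀ v ∈ spectrum ℂ f,
      ∀ k : ℤ, k ≠ 0 → u - v ≠ 2 * Real.pi * I * k)
    (hg : ∀ u ∈ spectrum ℂ g, ∀ v ∈ spectrum ℂ g,
      ∀ k : ℤ, k ≠ 0 → u - v ≠ 2 * Real.pi * I * k)
    (h : exp f * exp g = exp g * exp f) :
    f * g = g * f := by
  have hfg : Commute f (exp g) := Matrix.commute_of_commute_exp (injOn_exp_of_forall_sub_ne hf) h
  exact (Matrix.commute_of_commute_exp (injOn_exp_of_forall_sub_ne hg) hfg.symm).symm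
end

section
/- Let A = π·[[0,-λ],[λ,0]] with λ a positive integer, and B = π·[[a,b],[c,-a]] a traceless real matrix whose eigenvalues are ±iπμ with μ a positive integer (i.e., −a² − bc = μ²). Then exp(A)·exp(B) = exp(B)·exp(A). -/
/-!
Write `J = !![0, -1; 1, 0]`, so that `A = λ • (π • J)`. Diagonalizing `J` (eigenvalues `±i`)
gives `exp (π • J)` as a conjugate of `diag(e^{iπ}, e^{-iπ}) = -1`, so `exp (π • J) = -1`.
Hence `exp A = (-1)^λ` is central and commutes with `exp B`.
-/

open Matrix NormedSpace

lemma exp_smul_rotationGenerator (z : ℂ) :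
    exp (z • !![0, -1; 1, 0] : Matrix (Fin 2) (Fin 2) ℂ) =
      !![1, 1; -Complex.I, Complex.I] *
        diagonal ![Complex.exp (z * Complex.I), Complex.exp (-(z * Complex.I))] *
          (!![1, 1; -Complex.I, Complex.I])⁻¹ := by
  set P : Matrix (Fin 2) (Fin 2) ℂ := !![1, 1; -Complex.I, Complex.I]
  have hP : IsUnit P.det := by
    simp [P, det_fin_two_of]
  -- the columns `(1, ∓i)` of `P` are eigenvectors of `J` for the eigenvalues `±i`
  have hdiag : z • !![0, -1; 1, 0] * P = P * diagonal ![z * Complex.I, -(z * Complex.I)] := by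
    ext i j
    fin_cases i <;> fin_cases j <;> simp [P] <;> ring_nf <;> simp
  rw [← mul_nonsing_inv_cancel_right _ (z • !![0, -1; 1, 0]) hP, hdiag,
    exp_conj _ _ ((isUnit_iff_isUnit_det P).mpr hP), exp_diagonal]
  congr
  ext i
  fin_cases i <;> simp [Complex.exp_eq_exp_ℂ]

lemma exp_pi_smul_rotationGenerator :
    exp ((Real.pi : ℂ) • !![0, -1; 1, 0] : Matrix (Fin 2) (Fin 2) ℂ) = -1 := by
  have hdiag : diagonal ![Complex.exp (Real.pi * Complex.I), Complex.exp (-(Real.pi * Complex.I))]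
      = -1 := by
    rw [Complex.exp_neg, Complex.exp_pi_mul_I]
    ext i j
    fin_cases i <;> fin_cases j <;> simp
  rw [exp_smul_rotationGenerator, hdiag, mul_neg_one, neg_mul,
    mul_nonsing_inv _ (by simp [det_fin_two_of])]

theorem stmt_7_general (lam : ℕ) (a b c : ℝ) :
    let A : Matrix (Fin 2) (Fin 2) ℂ := (Real.pi : ℂ) • !![0, -(lam : ℂ); (lam : ℂ), 0]
    let B : Matrix (Fin 2) (Fin 2) ℂ := (Real.pi : ℂ) • !![(a : ℂ), (b : ℂ); (c : ℂ), -(a : ℂ)]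
    exp A * exp B = exp B * exp A := by
  intro A B
  have hA : A = lam • (Real.pi : ℂ) • !![0, -1; 1, 0] := by
    ext i j
    fin_cases i <;> fin_cases j <;> simp [A, mul_comm]
  have hexpA : exp A = (-1) ^ lam := by
    rw [hA, Matrix.exp_nsmul, exp_pi_smul_rotationGenerator]
  rw [hexpA]
  exact ((Commute.neg_one_left _).pow_left lam).eq

theorem stmt_7 (lam mu : ℕ) (hlam : 0 < lam) (hmu : 0 < mu) (a b c : ℝ)
    (heig : -a^2 - b*c = (mu : ℝ)^2) :
    let A : Matrix (Fin 2) (Fin 2) ℂ := (Real.pi : ℂ) • !![0, -(lam : ℂ); (lam : ℂ), 0]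
    let B : Matrix (Fin 2) (Fin 2) ℂ := (Real.pi : ℂ) • !![(a : ℂ), (b : ℂ); (c : ℂ), -(a : ℂ)]
    exp A * exp B = exp B * exp A :=
  stmt_7_general lam a b c
end

section
/- Let u ∈ ℂ* with e^u = 1 + u, A = [[0,1],[0,0]] and B = [[u,0],[0,0]]. Then for every nonzero t ∈ ℂ, exp(tA)·exp(B) ≠ exp(B)·exp(tA). -/
/-! Both exponentials are affine: `(tA)² = 0` gives `exp (tA) = 1 + tA`, and `B = diag(u, 0)` has
`exp B = diag(eᵘ, 1) = 1 + B` exactly because `eᵘ = 1 + u`. Hence the exponentials commute iff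
`tA` and `B` do, but the `(0, 1)` entries of `tA · B` and `B · tA` are `0` and `ut ≠ 0`. -/

open Matrix NormedSpace

theorem NormedSpace.exp_eq_sum_range_of_pow_eq_zero {𝔸 : Type*} [Ring 𝔸] [Algebra ℚ 𝔸]
    [TopologicalSpace 𝔸] [IsTopologicalRing 𝔸] {x : 𝔸} {n : ℕ} (hx : x ^ n = 0) :
    exp x = ∑ k ∈ Finset.range n, (k.factorial⁻¹ : ℚ) • x ^ k := by
  rw [exp_eq_tsum_rat]
  refine tsum_eq_sum fun k hk => ?_
  rw [pow_eq_zero_of_le (by simpa using hk) hx, smul_zero]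

theorem NormedSpace.exp_eq_one_add_of_sq_eq_zero {𝔸 : Type*} [Ring 𝔸] [Algebra ℚ 𝔸]
    [TopologicalSpace 𝔸] [IsTopologicalRing 𝔸] {x : 𝔸} (hx : x ^ 2 = 0) :
    exp x = 1 + x := by
  simp [exp_eq_sum_range_of_pow_eq_zero hx, Finset.sum_range_succ]

theorem commute_one_add_one_add_iff {R : Type*} [Ring R] {x y : R} :
    Commute (1 + x) (1 + y) ↔ Commute x y := by
  refine ⟨fun h => ?_, fun h => ((Commute.one_left 1).add_right (.one_left y)).add_left
    ((Commute.one_right x).add_right h)⟩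
  simpa only [add_sub_cancel_left] using (h.sub_left (.one_left _)).sub_right (.one_right _)

theorem stmt_9 (u : ℂ) (hu : u ≠ 0) (hue : Complex.exp u = 1 + u) :
    let A : Matrix (Fin 2) (Fin 2) ℂ := !![0, 1; 0, 0]
    let B : Matrix (Fin 2) (Fin 2) ℂ := !![u, 0; 0, 0]
    ∀ t : ℂ, t ≠ 0 → exp (t • A) * exp B ≠ exp B * exp (t • A) := by
  intro A B t ht hcomm
  have hA : exp (t • A) = 1 + t • A := by
    refine exp_eq_one_add_of_sq_eq_zero ?_
    have hA2 : A * A = 0 := by simp [A, ← Matrix.ext_iff, Fin.forall_fin_two]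
    rw [smul_pow, sq A, hA2, smul_zero]
  have hB : exp B = 1 + B := by
    have hv : exp ![u, 0] = 1 + ![u, 0] := by
      ext i; fin_cases i <;> simp [Pi.coe_exp, ← Complex.exp_eq_exp_ℂ, hue]
    rw [show B = diagonal ![u, 0] from (diagonal_vec2 u 0).symm, exp_diagonal, hv,
      ← diagonal_one, diagonal_add]
    rfl
  rw [hA, hB] at hcomm
  have h01 := congrFun₂ (commute_one_add_one_add_iff.mp hcomm).eq 0 1
  simp [A, B, hu, ht] at h01
end

section
/- The set U = {u ∈ ℂ* : e^u = 1 + u} is infinite. -/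
/-!
For `k ≥ 4` the map `w ↦ log w + 1 + 2πik` sends the closed disc of radius `πk` about
`1 + 2πik` into itself, since `|log w| ≤ log (1 + 3πk) + π ≤ πk` there, and is a contraction on
it, since `|w| ≥ πk` bounds the derivative `1/w` by `1/(πk)`. Its fixed point `w` satisfies
`exp (w - 1) = w`, so `w - 1` is a nonzero solution, and different `k` give different
solutions because `w - log w = 1 + 2πik`.
-/

open Complex Metric Set
open scoped NNReal Real

theorem LipschitzOnWith.exists_isFixedPt {α : Type*} [MetricSpace α] {f : α → α} {s : Set α}
    {K : ℝ≥0} (hf : LipschitzOnWith K f s) (hK : K < 1) (hsc : IsComplete s) (hsf : MapsTo f s s)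
    (hs : s.Nonempty) : ∃ x ∈ s, Function.IsFixedPt f x := by
  obtain ⟨x, hx⟩ := hs
  obtain ⟨y, hy, hfy, -⟩ := ContractingWith.exists_fixedPoint' hsc hsf
    ⟨hK, hf.mapsToRestrict hsf⟩ hx (edist_ne_top _ _)
  exact ⟨y, hy, hfy⟩

theorem Real.log_one_add_three_mul_pi_mul_add_pi_le {x : ℝ} (hx : 4 ≤ x) :
    Real.log (1 + 3 * (π * x)) + π ≤ π * x := by
  have hπ := Real.pi_gt_three
  have hexp := Real.quadratic_le_exp_of_nonneg (by nlinarith : 0 ≤ π * (x - 1))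
  rw [← le_sub_iff_add_le, Real.log_le_iff_le_exp (by positivity), ← mul_sub_one]
  have hquad : 4 * x + 2 ≤ π * (x - 1) ^ 2 := by nlinarith
  nlinarith

namespace Complex

theorem norm_log_le_log_norm_add_pi {z : ℂ} (hz : 1 ≤ ‖z‖) : ‖log z‖ ≤ Real.log ‖z‖ + π := by
  calc ‖log z‖ ≤ |(log z).re| + |(log z).im| := norm_le_abs_re_add_abs_im _
    _ ≤ Real.log ‖z‖ + π := by
      rw [log_re, log_im, abs_of_nonneg (Real.log_nonneg hz)]
      gcongr
      exact abs_arg_le_pi z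

theorem lipschitzOnWith_log {s : Set ℂ} (hs : Convex ℝ s) (hslit : s ⊆ slitPlane) {r : ℝ≥0}
    (hr : 0 < r) (hnorm : ∀ z ∈ s, (r : ℝ) ≤ ‖z‖) : LipschitzOnWith r⁻¹ log s := by
  refine hs.lipschitzOnWith_of_nnnorm_hasDerivWithin_le
    (fun z hz ↦ (hasDerivAt_log (hslit hz)).hasDerivWithinAt) fun z hz ↦ ?_
  rw [nnnorm_inv]
  exact inv_anti₀ hr (hnorm z hz)

theorem exists_log_add_eq_self {k : ℕ} (hk : 4 ≤ k) :
    ∃ w : ℂ, log w + (1 + 2 * π * k * I) = w := by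
  set c : ℂ := 1 + 2 * π * k * I
  set R : ℝ := π * k
  have hπ := Real.pi_gt_three
  have hk' : (4 : ℝ) ≤ k := by exact_mod_cast hk
  have hR : 1 < R := by nlinarith
  have hc_im : c.im = 2 * R := by simp [c, R, mul_assoc]
  have hc_norm : ‖c‖ ≤ 1 + 2 * R := by
    calc ‖c‖ ≤ ‖(1 : ℂ)‖ + ‖2 * π * k * I‖ := norm_add_le _ _
      _ = 1 + 2 * R := by simp [R, abs_of_pos Real.pi_pos, mul_assoc]
  have him : ∀ w ∈ closedBall c R, R ≤ w.im := fun w hw ↦ by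
    have := (abs_le.1 ((abs_im_le_norm (w - c)).trans (mem_closedBall_iff_norm.1 hw))).1
    rw [sub_im, hc_im] at this
    linarith
  have hnorm : ∀ w ∈ closedBall c R, R ≤ ‖w‖ := fun w hw ↦
    (him w hw).trans ((le_abs_self _).trans (abs_im_le_norm w))
  have hmaps : MapsTo (fun w ↦ log w + c) (closedBall c R) (closedBall c R) := fun w hw ↦ by
    have hw_norm : ‖w‖ ≤ 1 + 3 * R := by
      have := norm_le_norm_add_norm_sub' w c
      linarith [mem_closedBall_iff_norm.1 hw]
    have hw_one : 1 ≤ ‖w‖ := by linarith [hnorm w hw]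
    rw [mem_closedBall_iff_norm, add_sub_cancel_right]
    calc ‖log w‖ ≤ Real.log ‖w‖ + π := norm_log_le_log_norm_add_pi hw_one
      _ ≤ Real.log (1 + 3 * R) + π := by gcongr
      _ ≤ R := Real.log_one_add_three_mul_pi_mul_add_pi_le hk'
  have hslit : closedBall c R ⊆ slitPlane := fun w hw ↦
    mem_slitPlane_iff.2 (Or.inr (show (0:ℝ) < w.im by linarith [him w hw]).ne')
  have hr : (R.toNNReal : ℝ) = R := Real.coe_toNNReal _ (by linarith)
  have hlog := lipschitzOnWith_log (convex_closedBall c R) hslit (r := R.toNNReal)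
    (Real.toNNReal_pos.2 (by linarith)) (by simpa only [hr] using hnorm)
  have hlip : LipschitzOnWith R.toNNReal⁻¹ (fun w ↦ log w + c) (closedBall c R) :=
    fun x hx y hy ↦ by simpa only [edist_add_right] using hlog hx hy
  have hK : R.toNNReal⁻¹ < 1 := inv_lt_one_of_one_lt₀ (by rw [← NNReal.coe_lt_coe, hr]; simpa)
  obtain ⟨w, -, hw⟩ := hlip.exists_isFixedPt hK isClosed_closedBall.isComplete hmaps
    ⟨c, mem_closedBall_self (by linarith)⟩
  exact ⟨w, hw⟩

theorem exp_sub_one_eq_of_log_add_eq {w : ℂ} {k : ℕ} (h : log w + (1 + 2 * π * k * I) = w) :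
    exp (w - 1) = w := by
  have hw : w ≠ 0 := by
    rintro rfl
    simpa using congrArg re h
  calc exp (w - 1) = exp (log w + k * (2 * π * I)) :=
      congrArg exp (by linear_combination -h)
    _ = w := by rw [exp_add, exp_nat_mul_two_pi_mul_I, mul_one, exp_log hw]

theorem ne_one_of_log_add_eq {w : ℂ} {k : ℕ} (h : log w + (1 + 2 * π * k * I) = w) (hk : k ≠ 0) :
    w ≠ 1 := by
  rintro rfl
  simpa [Real.pi_ne_zero, hk] using congrArg im h

theorem eq_of_log_add_eq {w : ℂ} {k m : ℕ} (hk : log w + (1 + 2 * π * k * I) = w)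
    (hm : log w + (1 + 2 * π * m * I) = w) : k = m := by
  simpa [Real.pi_ne_zero] using congrArg im (add_left_cancel (hk.trans hm.symm))

end Complex

theorem stmt_10 : {u : ℂ | u ≠ 0 ∧ Complex.exp u = 1 + u}.Infinite := by
  choose w hw using fun k : ℕ ↦ Complex.exists_log_add_eq_self (k := k + 4) (by omega)
  refine Set.infinite_of_injective_forall_mem (f := fun k ↦ w k - 1) (fun k m hkm ↦ ?_)
    fun k ↦ ⟨sub_ne_zero.2 (Complex.ne_one_of_log_add_eq (hw k) (by omega)), ?_⟩
  · have := Complex.eq_of_log_add_eq (hw k) ((sub_left_inj.1 hkm).symm ▸ hw m)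
    omega
  · rw [Complex.exp_sub_one_eq_of_log_add_eq (hw k), add_sub_cancel]
end

section
/- Let A, B be 2×2 complex matrices with A² = 0, AB = 0, and exp(B) = id + B. Then exp(tA + B) = exp(tA)·exp(B) for all t ∈ ℂ, provided exp(tA + B) = id + tA + B; in particular for A = [[0,1],[0,0]], B = [[u,0],[0,0]] with e^u = 1 + u, the identity exp(tA + B) = id + tA + B holds for all t ∈ ℂ. -/
/-!
If `x ^ 2 = u • x` then `x ^ (n + 1) = u ^ n • x`, so the exponential series of `x` is that of
`u` times `x`, up to the constant term: `u • exp x = u • 1 + (exp u - 1) • x`. When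
`exp u = 1 + u` and `u ≠ 0` this is `exp x = 1 + x`; when `u = 0` the series stops after two
terms and gives the same. Both parts of the theorem are instances: `t • A` squares to zero and
annihilates `B`, and `t • !![0, 1; 0, 0] + !![u, 0; 0, 0] = !![u, t; 0, 0]` squares to `u` times
itself.
-/

open Matrix NormedSpace

theorem pow_succ_eq_pow_smul_of_sq_eq_smul {R A : Type*} [CommSemiring R] [Semiring A]
    [Algebra R A] {x : A} {u : R} (hx : x ^ 2 = u • x) (n : ℕ) : x ^ (n + 1) = u ^ n • x := by
  induction n with
  | zero => simp
  | succ n ih => rw [pow_succ, ih, smul_mul_assoc, ← sq, hx, smul_smul, pow_succ]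

namespace NormedSpace

section TopologicalAlgebra

variable {𝔸 : Type*} [Ring 𝔸] [TopologicalSpace 𝔸] [IsTopologicalRing 𝔸]

theorem exp_eq_one_add_of_sq_eq_zero_s12 (𝕂 : Type*) [Field 𝕂] [CharZero 𝕂] [Algebra 𝕂 𝔸]
    {x : 𝔸} (hx : x ^ 2 = 0) : exp x = 1 + x := by
  rw [congrFun (exp_eq_tsum 𝕂) x, tsum_eq_sum (s := Finset.range 2)]
  · simp [Finset.sum_range_succ]
  · intro n hn
    rw [pow_eq_zero_of_le (by simp at hn; omega) hx, smul_zero]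

theorem exp_mul_exp_of_sq_eq_zero_of_mul_eq_zero (𝕂 : Type*) [Field 𝕂] [CharZero 𝕂]
    [Algebra 𝕂 𝔸] {x y : 𝔸} (hx : x ^ 2 = 0) (hxy : x * y = 0)
    (hy : exp y = 1 + y) : exp x * exp y = 1 + x + y := by
  rw [exp_eq_one_add_of_sq_eq_zero_s12 𝕂 hx, hy, add_mul, one_mul, mul_add, mul_one, hxy, add_zero,
    add_right_comm]

end TopologicalAlgebra

section NormedAlgebra

variable {𝕂 𝔸 : Type*} [RCLike 𝕂] [NormedRing 𝔸] [NormedAlgebra 𝕂 𝔸] [CompleteSpace 𝔸]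

open Nat in
theorem smul_exp_of_sq_eq_smul {x : 𝔸} {u : 𝕂} (hx : x ^ 2 = u • x) :
    u • exp x = u • 1 + (exp u - 1) • x := by
  have hterm : ∀ n : ℕ, (n !⁻¹ : 𝕂) • (u • x ^ n) - ((n !⁻¹ : 𝕂) • u ^ n) • x =
      if n = 0 then u • 1 - x else 0 := by
    rintro (_ | n)
    · simp
    · rw [pow_succ_eq_pow_smul_of_sq_eq_smul hx, smul_smul u, ← pow_succ' u n, smul_assoc,
        sub_self, if_neg n.succ_ne_zero]
  have hsum := ((exp_series_hasSum_exp' (𝕂 := 𝕂) x).const_smul u).sub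
    ((exp_series_hasSum_exp' (𝕂 := 𝕂) u).smul_const x)
  simp_rw [smul_comm u, hterm] at hsum
  have hdiff := hsum.unique (hasSum_ite_eq 0 _)
  rw [sub_smul, one_smul]
  linear_combination (norm := module) hdiff

theorem exp_eq_one_add_of_sq_eq_smul {x : 𝔸} {u : 𝕂} (hx : x ^ 2 = u • x)
    (hu : exp u = 1 + u) : exp x = 1 + x := by
  rcases eq_or_ne u 0 with rfl | hu0
  · exact exp_eq_one_add_of_sq_eq_zero_s12 𝕂 (by simpa using hx)
  · have hsmul := smul_exp_of_sq_eq_smul hx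
    rw [hu, add_sub_cancel_left, ← smul_add] at hsmul
    exact smul_right_injective 𝔸 hu0 hsmul

end NormedAlgebra

end NormedSpace

theorem Matrix.sq_of_second_row_eq_zero {R : Type*} [CommRing R] (a b : R) :
    (!![a, b; 0, 0] : Matrix (Fin 2) (Fin 2) R) ^ 2 = a • !![a, b; 0, 0] := by
  ext i j
  fin_cases i <;> fin_cases j <;> simp [sq]

attribute [local instance] Matrix.linftyOpNormedRing Matrix.linftyOpNormedAlgebra

theorem stmt_12 (A B : Matrix (Fin 2) (Fin 2) ℂ)
    (hA : A ^ 2 = 0) (hAB : A * B = 0) (hB : exp B = 1 + B) :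
    ((∀ t : ℂ, exp (t • A + B) = 1 + t • A + B) →
      ∀ t : ℂ, exp (t • A + B) = exp (t • A) * exp B) ∧
    (∀ u : ℂ, Complex.exp u = 1 + u → ∀ t : ℂ,
      exp (t • (!![0, 1; 0, 0] : Matrix (Fin 2) (Fin 2) ℂ) + !![u, 0; 0, 0]) =
        1 + t • (!![0, 1; 0, 0] : Matrix (Fin 2) (Fin 2) ℂ) + !![u, 0; 0, 0]) := by
  constructor
  · intro h t
    rw [h t, exp_mul_exp_of_sq_eq_zero_of_mul_eq_zero ℂ (by rw [smul_pow, hA, smul_zero])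
      (by rw [smul_mul_assoc, hAB, smul_zero]) hB]
  · intro u hu t
    have hM : t • !![0, 1; 0, 0] + !![u, 0; 0, 0] = !![u, t; 0, 0] := by
      ext i j
      fin_cases i <;> fin_cases j <;> simp
    rw [add_assoc, hM]
    exact exp_eq_one_add_of_sq_eq_smul (Matrix.sq_of_second_row_eq_zero u t)
      (Complex.exp_eq_exp_ℂ ▸ hu)
end

section
/- Let A, B be 2×2 complex matrices such that the commutator AB − BA is a (nontrivial) linear combination of A, B, and id. If A is diagonalizable with distinct eigenvalues, then A and B are simultaneously triangularizable. -/
open Matrix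

lemma tri_of (M : Matrix (Fin 2) (Fin 2) ℂ) (h : M 1 0 = 0) : M.BlockTriangular id := by
  intro i j hij
  fin_cases i <;> fin_cases j <;> simp_all

theorem stmt_15 (A B : Matrix (Fin 2) (Fin 2) ℂ)
    (hcomm : ∃ a b c : ℂ, ¬(a = 0 ∧ b = 0 ∧ c = 0) ∧
      A * B - B * A = a • A + b • B + c • (1 : Matrix (Fin 2) (Fin 2) ℂ))
    (hdiag : ∃ P : Matrix (Fin 2) (Fin 2) ℂ, IsUnit P ∧ ∃ d₁ d₂ : ℂ, d₁ ≠ d₂ ∧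
      P⁻¹ * A * P = !![d₁, 0; 0, d₂]) :
    ∃ Q : Matrix (Fin 2) (Fin 2) ℂ, IsUnit Q ∧
      (Q⁻¹ * A * Q).BlockTriangular id ∧ (Q⁻¹ * B * Q).BlockTriangular id := by
  obtain ⟨a, b, c, -, hC⟩ := hcomm
  obtain ⟨P, hP, d₁, d₂, hd, hPA⟩ := hdiag
  have hdet := (Matrix.isUnit_iff_isUnit_det P).mp hP
  have h1 : P⁻¹ * P = 1 := Matrix.nonsing_inv_mul P hdet
  have h2 : P * P⁻¹ = 1 := Matrix.mul_nonsing_inv P hdet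
  set A' := P⁻¹ * A * P with hA'
  set B' := P⁻¹ * B * P with hB'
  have hmul : ∀ X Y : Matrix (Fin 2) (Fin 2) ℂ,
      (P⁻¹ * X * P) * (P⁻¹ * Y * P) = P⁻¹ * (X * Y) * P := by
    intro X Y
    calc (P⁻¹ * X * P) * (P⁻¹ * Y * P) = P⁻¹ * X * (P * P⁻¹) * Y * P := by
          simp only [Matrix.mul_assoc]
      _ = P⁻¹ * (X * Y) * P := by rw [h2]; simp only [Matrix.mul_one, Matrix.mul_assoc]
  have key : A' * B' - B' * A' = a • A' + b • B' + c • 1 := by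
    rw [hA', hB', hmul, hmul, ← Matrix.sub_mul, ← Matrix.mul_sub, hC]
    simp only [Matrix.mul_add, Matrix.add_mul, Matrix.mul_smul, Matrix.smul_mul,
      Matrix.mul_one, Matrix.mul_assoc, h1]
  rw [hPA] at key
  have e10 := congrFun (congrFun key 1) 0
  have e01 := congrFun (congrFun key 0) 1
  simp [Matrix.mul_apply, Fin.sum_univ_two, Matrix.one_apply, Matrix.vecMul,
    dotProduct] at e10 e01
  by_cases hr : B' 1 0 = 0
  · refine ⟨P, hP, ?_, ?_⟩
    · exact tri_of _ (by show A' 1 0 = 0; rw [hPA]; simp)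
    · exact tri_of _ hr
  · have hb : b = d₂ - d₁ := by
      have h : (d₂ - d₁ - b) * (B' 1 0) = 0 := by linear_combination e10
      rcases mul_eq_zero.mp h with h | h
      · linear_combination -h
      · exact absurd h hr
    have hq : B' 0 1 = 0 := by
      have h : (2 * (d₁ - d₂)) * (B' 0 1) = 0 := by
        linear_combination e01 + (B' 0 1) * hb
      rcases mul_eq_zero.mp h with h | h
      · exact absurd (by linear_combination h / 2 : d₁ = d₂) hd
      · exact h
    set S : Matrix (Fin 2) (Fin 2) ℂ := !![0, 1; 1, 0] with hS
    have hSS : S * S = 1 := by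
      rw [hS]; ext i j; fin_cases i <;> fin_cases j <;>
        simp [Matrix.mul_apply, Fin.sum_univ_two, Matrix.one_apply]
    have hSU : IsUnit S := isUnit_iff_exists.mpr ⟨S, hSS, hSS⟩
    have hSinv : S⁻¹ = S := Matrix.inv_eq_right_inv hSS
    refine ⟨P * S, hP.mul hSU, ?_, ?_⟩
    · have hQinv : (P * S)⁻¹ = S * P⁻¹ := by
        rw [Matrix.mul_inv_rev, hSinv]
      rw [hQinv]
      apply tri_of
      have : S * P⁻¹ * A * (P * S) = S * A' * S := by
        rw [hA']; simp only [Matrix.mul_assoc]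
      rw [this, hPA]
      simp [Matrix.mul_apply, Fin.sum_univ_two, hS]
    · have hQinv : (P * S)⁻¹ = S * P⁻¹ := by
        rw [Matrix.mul_inv_rev, hSinv]
      rw [hQinv]
      apply tri_of
      have : S * P⁻¹ * B * (P * S) = S * B' * S := by
        rw [hB']; simp only [Matrix.mul_assoc]
      rw [this]
      simp [Matrix.mul_apply, Fin.sum_univ_two, Matrix.vecMul, dotProduct, hS, hq]
end

section
/- Let f, g be 2×2 complex matrices with fg ≠ gf and exp(t·f + g) = exp(t·f)·exp(g) for all t ∈ ℂ. Then there exist scalars σ, τ ∈ ℂ such that f' = f − σ·id and g' = g − τ·id satisfy: f' ≠ 0, f'² = 0, f'∘g' = 0, and tr(g') ∈ U where U = {u ∈ ℂ* : e^u = 1 + u}. -/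
/-
Subtracting scalars from `f` and `g` multiplies both sides of the hypothesis by the same nonzero
number, so we may take `F` and `G` traceless. Then `(t • F + G) ^ 2` is the scalar
`q t = -det F * t ^ 2 + tr (F * G) * t - det G`, which makes `exp (t • F + G)` explicit in terms
of the entire functions `coshSqrt` and `sinhcSqrt` evaluated at `q t`.

If `det F ≠ 0`, then `F` has eigenvalues `±μ`, and compressing the hypothesis between the two
eigenprojections gives `sinhcSqrt (q t) = exp (±t μ) * sinhcSqrt (-det G)` for all `t`: impossible,
since `q` is onto while `sinhcSqrt` vanishes at `-π ^ 2` but not at `0`. Hence `F ^ 2 = 0` and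
`exp (t • F) = 1 + t • F`. Taking traces would make `coshSqrt` affine unless `tr (F * G) = 0`; then
comparing coefficients of `F` gives `F * G = κ • F` with `κ ^ 2 = -det G` and
`κ sinh κ = sinh κ - κ cosh κ`, i.e. `exp (-2κ) = 1 - 2κ`, and `g' = G - κ • 1` works.
-/

open Matrix NormedSpace
open scoped Nat Real

/- `coshSqrt (w ^ 2) = cosh w` and `w * sinhcSqrt (w ^ 2) = sinh w`; as power series in `w ^ 2`
they need no choice of square root, and `sinhcSqrt 0 = 1`. -/
noncomputable def coshSqrt (z : ℂ) : ℂ := ∑' n : ℕ, ((2 * n)! : ℂ)⁻¹ * z ^ n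

noncomputable def sinhcSqrt (z : ℂ) : ℂ := ∑' n : ℕ, ((2 * n + 1)! : ℂ)⁻¹ * z ^ n

theorem hasSum_coshSqrt_sq (w : ℂ) :
    HasSum (fun n : ℕ => ((2 * n)! : ℂ)⁻¹ * (w ^ 2) ^ n) (Complex.cosh w) := by
  simpa only [← pow_mul, inv_mul_eq_div] using Complex.hasSum_cosh w

theorem hasSum_sinhcSqrt_sq {w : ℂ} (hw : w ≠ 0) :
    HasSum (fun n : ℕ => ((2 * n + 1)! : ℂ)⁻¹ * (w ^ 2) ^ n) (Complex.sinh w / w) := by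
  convert! (Complex.hasSum_sinh w).div_const w using 1
  funext n
  rw [← pow_mul, pow_succ]
  field_simp

theorem hasSum_coshSqrt (z : ℂ) :
    HasSum (fun n : ℕ => ((2 * n)! : ℂ)⁻¹ * z ^ n) (coshSqrt z) := by
  obtain ⟨w, rfl⟩ := IsAlgClosed.exists_pow_nat_eq z two_pos
  exact (hasSum_coshSqrt_sq w).summable.hasSum

theorem hasSum_sinhcSqrt (z : ℂ) :
    HasSum (fun n : ℕ => ((2 * n + 1)! : ℂ)⁻¹ * z ^ n) (sinhcSqrt z) := by
  obtain ⟨w, rfl⟩ := IsAlgClosed.exists_pow_nat_eq z two_pos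
  rcases eq_or_ne w 0 with rfl | hw
  · exact (hasSum_single 0 fun n hn => by simp [hn]).summable.hasSum
  · exact (hasSum_sinhcSqrt_sq hw).summable.hasSum

theorem coshSqrt_sq (w : ℂ) : coshSqrt (w ^ 2) = Complex.cosh w :=
  (hasSum_coshSqrt_sq w).tsum_eq

theorem mul_sinhcSqrt_sq (w : ℂ) : w * sinhcSqrt (w ^ 2) = Complex.sinh w := by
  rcases eq_or_ne w 0 with rfl | hw
  · simp
  · rw [sinhcSqrt, (hasSum_sinhcSqrt_sq hw).tsum_eq, mul_div_cancel₀ _ hw]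

theorem coshSqrt_zero : coshSqrt 0 = 1 := by
  simpa using coshSqrt_sq 0

theorem sinhcSqrt_zero : sinhcSqrt 0 = 1 := by
  simpa using (hasSum_sinhcSqrt 0).unique (hasSum_single 0 fun n hn => by simp [hn])

theorem coshSqrt_sq_sub_mul_sinhcSqrt_sq (z : ℂ) : coshSqrt z ^ 2 - z * sinhcSqrt z ^ 2 = 1 := by
  obtain ⟨w, rfl⟩ := IsAlgClosed.exists_pow_nat_eq z two_pos
  rw [← Complex.cosh_sq_sub_sinh_sq w, ← coshSqrt_sq, ← mul_sinhcSqrt_sq]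
  ring

theorem sq_pi_mul_I : ((π : ℂ) * Complex.I) ^ 2 = -π ^ 2 := by
  rw [mul_pow, Complex.I_sq, mul_neg_one]

theorem sinhcSqrt_neg_pi_sq : sinhcSqrt (-π ^ 2) = 0 := by
  have h := mul_sinhcSqrt_sq (π * Complex.I)
  rw [sq_pi_mul_I, Complex.sinh_mul_I, Complex.sin_pi, zero_mul] at h
  exact (mul_eq_zero.mp h).resolve_left (by simp [Real.pi_ne_zero])

theorem coshSqrt_neg_pi_sq : coshSqrt (-π ^ 2) = -1 := by
  rw [← sq_pi_mul_I, coshSqrt_sq, Complex.cosh_mul_I, Complex.cos_pi]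

theorem coshSqrt_neg_four_mul_pi_sq : coshSqrt (-(4 * π ^ 2)) = 1 := by
  rw [show -(4 * (π : ℂ) ^ 2) = (2 * π * Complex.I) ^ 2 by
    rw [mul_pow, Complex.I_sq]; ring, coshSqrt_sq, Complex.cosh_mul_I, Complex.cos_two_pi]

theorem not_forall_coshSqrt_eq_affine (a b : ℂ) : ¬ ∀ z, coshSqrt z = a + b * z := by
  intro h
  have h₀ := h 0
  have h₁ := h (-π ^ 2)
  have h₂ := h (-(4 * π ^ 2))
  rw [coshSqrt_zero] at h₀
  rw [coshSqrt_neg_pi_sq] at h₁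
  rw [coshSqrt_neg_four_mul_pi_sq] at h₂
  have hb : b = 0 := by
    have : (4 * π ^ 2 : ℂ) * b = 0 := by linear_combination h₂ - h₀
    simpa [Real.pi_ne_zero] using this
  subst hb
  norm_num at h₀ h₁
  rw [← h₀] at h₁
  norm_num at h₁

theorem not_forall_sinhcSqrt_comp_eq_exp_mul {q : ℂ → ℂ} (hq : Function.Surjective q) (ν c : ℂ) :
    ¬ ∀ t, sinhcSqrt (q t) = Complex.exp (t * ν) * c := by
  intro h
  rcases eq_or_ne c 0 with rfl | hc
  · obtain ⟨t, ht⟩ := hq 0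
    simpa [ht, sinhcSqrt_zero] using h t
  · obtain ⟨t, ht⟩ := hq (-π ^ 2)
    have := h t
    rw [ht, sinhcSqrt_neg_pi_sq] at this
    exact mul_ne_zero (Complex.exp_ne_zero _) hc this.symm

theorem surjective_quadratic {a : ℂ} (ha : a ≠ 0) (b c : ℂ) :
    Function.Surjective fun t : ℂ => a * t ^ 2 + b * t + c := by
  intro z
  obtain ⟨t, ht⟩ :=
    exists_quadratic_eq_zero ha (IsAlgClosed.exists_eq_mul_self (discrim a b (c - z)))
  exact ⟨t, by linear_combination ht⟩

theorem exp_neg_two_mul_of_mul_sinhcSqrt_sq {κ : ℂ}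
    (h : κ * sinhcSqrt (κ ^ 2) = sinhcSqrt (κ ^ 2) - coshSqrt (κ ^ 2)) :
    Complex.exp (-(2 * κ)) = 1 - 2 * κ := by
  have hsinh : κ * Complex.sinh κ = Complex.sinh κ - κ * Complex.cosh κ := by
    rw [← mul_sinhcSqrt_sq, ← coshSqrt_sq]
    linear_combination κ * h
  rw [Complex.sinh, Complex.cosh] at hsinh
  have hneg : Complex.exp (-κ) = (1 - 2 * κ) * Complex.exp κ := by linear_combination 2 * hsinh
  refine mul_right_cancel₀ (Complex.exp_ne_zero κ) ?_
  rw [← Complex.exp_add, ← hneg]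
  ring_nf

theorem left_ne_zero_of_not_commute {R : Type*} [MulZeroClass R] {a b : R} (h : ¬ Commute a b) :
    a ≠ 0 := by
  rintro rfl
  exact h (Commute.zero_left b)

section ScalarSquare

variable {A : Type*} [Ring A] [Algebra ℂ A] {F : A} {μ : ℂ}

/- The projection onto the `μ`-eigenspace of `F` when `F * F = μ ^ 2 • 1` and `μ ≠ 0`. -/
noncomputable def eigenProj (F : A) (μ : ℂ) : A := (2⁻¹ : ℂ) • (1 + μ⁻¹ • F)

theorem eigenProj_mul_self (hF : F * F = μ ^ 2 • 1) (hμ : μ ≠ 0) :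
    eigenProj F μ * F = μ • eigenProj F μ := by
  simp only [eigenProj, add_mul, smul_mul_assoc, one_mul, hF, smul_add, smul_smul]
  match_scalars <;> field_simp

theorem eigenProj_mul_eigenProj_neg (hF : F * F = μ ^ 2 • 1) (hμ : μ ≠ 0) :
    eigenProj F μ * eigenProj F (-μ) = 0 := by
  simp only [eigenProj, add_mul, mul_add, smul_mul_assoc, mul_smul_comm, one_mul, mul_one, hF,
    smul_add, smul_smul]
  match_scalars <;> field_simp <;> ring

theorem commutator_eq_eigenProj (hμ : μ ≠ 0) (G : A) :
    F * G - G * F = (2 * μ) •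
      (eigenProj F μ * G * eigenProj F (-μ) - eigenProj F (-μ) * G * eigenProj F μ) := by
  simp only [eigenProj, add_mul, mul_add, smul_mul_assoc, mul_smul_comm, one_mul, mul_one,
    smul_add, smul_sub, smul_smul]
  match_scalars <;> field_simp <;> ring

theorem mul_smul_one_add_smul_mul_of_mul_eq_zero {P Q : A} (h : P * Q = 0) (a b : ℂ) (X : A) :
    P * (a • 1 + b • X) * Q = b • (P * X * Q) := by
  rw [mul_add, add_mul, mul_smul_comm, mul_one, smul_mul_assoc, h, smul_zero, zero_add,
    mul_smul_comm, smul_mul_assoc]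

variable [TopologicalSpace A] [IsTopologicalRing A] [T2Space A] [ContinuousSMul ℂ A]

theorem exp_eq_of_mul_self_eq_smul_one {M : A} {δ : ℂ} (hM : M * M = δ • 1) :
    exp M = coshSqrt δ • 1 + sinhcSqrt δ • M := by
  have hpow : ∀ k : ℕ, M ^ (2 * k) = δ ^ k • 1 := fun k => by
    rw [pow_mul, sq, hM, smul_pow, one_pow]
  rw [exp_eq_tsum ℂ]
  refine HasSum.tsum_eq (HasSum.even_add_odd ?_ ?_)
  · convert (hasSum_coshSqrt δ).smul_const (1 : A) using 2 with k
    rw [hpow, smul_smul]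
  · convert (hasSum_sinhcSqrt δ).smul_const M using 2 with k
    rw [pow_succ, hpow, smul_mul_assoc, one_mul, smul_smul]

theorem exp_smul_one (c : ℂ) : exp (c • (1 : A)) = Complex.exp c • 1 := by
  rw [exp_eq_of_mul_self_eq_smul_one (δ := c ^ 2) (by rw [smul_mul_smul, one_mul, sq]),
    coshSqrt_sq, smul_smul, mul_comm, mul_sinhcSqrt_sq, ← add_smul, Complex.cosh_add_sinh]

theorem exp_eq_one_add_of_mul_self_eq_zero {M : A} (hM : M * M = 0) : exp M = 1 + M := by
  rw [exp_eq_of_mul_self_eq_smul_one (δ := 0) (by rw [hM, zero_smul]), coshSqrt_zero,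
    sinhcSqrt_zero, one_smul, one_smul]

theorem eigenProj_mul_exp_smul (hF : F * F = μ ^ 2 • 1) (hμ : μ ≠ 0) (t : ℂ) :
    eigenProj F μ * exp (t • F) = Complex.exp (t * μ) • eigenProj F μ := by
  have hsq : (t • F) * (t • F) = (t * μ) ^ 2 • 1 := by
    rw [smul_mul_smul, hF, smul_smul, mul_pow, sq t]
  rw [exp_eq_of_mul_self_eq_smul_one hsq, mul_add, mul_smul_comm, mul_one, mul_smul_comm,
    mul_smul_comm, eigenProj_mul_self hF hμ, smul_smul, smul_smul, coshSqrt_sq, mul_assoc,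
    mul_comm (sinhcSqrt _), mul_sinhcSqrt_sq, ← add_smul, Complex.cosh_add_sinh]

end ScalarSquare

namespace Matrix

theorem exp_add_smul_one {n : Type*} [Fintype n] [DecidableEq n] (M : Matrix n n ℂ) (c : ℂ) :
    exp (M + c • 1) = Complex.exp c • exp M := by
  rw [Matrix.exp_add_of_commute _ _ ((Commute.one_right M).smul_right c), exp_smul_one,
    mul_smul_comm, mul_one]

theorem exp_smul_add_eq_of_add_smul_one {n : Type*} [Fintype n] [DecidableEq n]
    {f g : Matrix n n ℂ} {a b : ℂ}
    (h : ∀ t : ℂ, exp (t • (f + a • 1) + (g + b • 1)) = exp (t • (f + a • 1)) * exp (g + b • 1))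
    (t : ℂ) : exp (t • f + g) = exp (t • f) * exp g := by
  have := h t
  rw [show t • (f + a • 1) + (g + b • 1) = t • f + g + (t * a + b) • 1 by module,
    show t • (f + a • 1) = t • f + (t * a) • 1 by module, exp_add_smul_one, exp_add_smul_one,
    exp_add_smul_one, smul_mul_smul, Complex.exp_add] at this
  exact smul_right_injective _ (mul_ne_zero (Complex.exp_ne_zero _) (Complex.exp_ne_zero _)) this

section FinTwo

variable {R : Type*} [CommRing R]

theorem mul_self_eq_neg_det_smul_one_of_trace_eq_zero {M : Matrix (Fin 2) (Fin 2) R}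
    (h : M.trace = 0) : M * M = (-M.det) • 1 := by
  rw [trace_fin_two] at h
  ext i j
  fin_cases i <;> fin_cases j <;> simp [mul_apply, det_fin_two]
  · linear_combination M 0 0 * h
  · linear_combination M 0 1 * h
  · linear_combination M 1 0 * h
  · linear_combination M 1 1 * h

theorem mul_add_mul_fin_two (A B : Matrix (Fin 2) (Fin 2) R) :
    A * B + B * A = A.trace • B + B.trace • A + ((A * B).trace - A.trace * B.trace) • 1 := by
  ext i j
  fin_cases i <;> fin_cases j <;> simp [mul_apply, trace_fin_two] <;> ring

end FinTwo

theorem trace_sub_half_trace_smul_one {K : Type*} [Field K] [NeZero (2 : K)]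
    (M : Matrix (Fin 2) (Fin 2) K) : (M - (M.trace / 2) • 1).trace = 0 := by
  rw [trace_sub, trace_smul, trace_one, Fintype.card_fin, smul_eq_mul, Nat.cast_ofNat,
    div_mul_cancel₀ _ two_ne_zero, sub_self]

theorem exp_of_trace_eq_zero {M : Matrix (Fin 2) (Fin 2) ℂ} (h : M.trace = 0) :
    exp M = coshSqrt (-M.det) • 1 + sinhcSqrt (-M.det) • M :=
  exp_eq_of_mul_self_eq_smul_one (mul_self_eq_neg_det_smul_one_of_trace_eq_zero h)

section Traceless

variable {F G : Matrix (Fin 2) (Fin 2) ℂ}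

theorem smul_add_mul_self_of_trace_eq_zero (hF : F.trace = 0) (hG : G.trace = 0) (t : ℂ) :
    (t • F + G) * (t • F + G) = (-F.det * t ^ 2 + (F * G).trace * t - G.det) • 1 := by
  have hanti := mul_add_mul_fin_two F G
  rw [hF, hG, zero_smul, zero_smul, zero_add, zero_add, mul_zero, sub_zero] at hanti
  have hexpand : (t • F + G) * (t • F + G) = t ^ 2 • (F * F) + t • (F * G + G * F) + G * G := by
    simp only [add_mul, mul_add, smul_mul_assoc, mul_smul_comm, smul_add]
    module
  rw [hexpand, hanti, mul_self_eq_neg_det_smul_one_of_trace_eq_zero hF,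
    mul_self_eq_neg_det_smul_one_of_trace_eq_zero hG]
  module

theorem exp_smul_add_of_trace_eq_zero (hF : F.trace = 0) (hG : G.trace = 0) (t : ℂ) :
    exp (t • F + G) = coshSqrt (-F.det * t ^ 2 + (F * G).trace * t - G.det) • 1 +
      sinhcSqrt (-F.det * t ^ 2 + (F * G).trace * t - G.det) • (t • F + G) :=
  exp_eq_of_mul_self_eq_smul_one (smul_add_mul_self_of_trace_eq_zero hF hG t)

theorem exp_smul_mul_exp_of_det_eq_zero (hF : F.trace = 0) (hG : G.trace = 0) (hdet : F.det = 0)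
    (t : ℂ) :
    exp (t • F) * exp G = coshSqrt (-G.det) • 1 + sinhcSqrt (-G.det) • G +
      (t * coshSqrt (-G.det)) • F + (t * sinhcSqrt (-G.det)) • (F * G) := by
  have hFF : (t • F) * (t • F) = 0 := by
    rw [smul_mul_smul, mul_self_eq_neg_det_smul_one_of_trace_eq_zero hF, hdet, neg_zero,
      zero_smul, smul_zero]
  rw [exp_eq_one_add_of_mul_self_eq_zero hFF, exp_of_trace_eq_zero hG]
  simp only [add_mul, mul_add, one_mul, smul_mul_assoc, mul_smul_comm, mul_one]
  module

theorem sinhcSqrt_smul_eigenProj_mul_mul_eigenProj_neg (hF : F.trace = 0) (hG : G.trace = 0)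
    (H : ∀ t : ℂ, exp (t • F + G) = exp (t • F) * exp G) {ν : ℂ} (hν : ν ^ 2 = -F.det)
    (hν0 : ν ≠ 0) (t : ℂ) :
    sinhcSqrt (-F.det * t ^ 2 + (F * G).trace * t - G.det) •
        (eigenProj F ν * G * eigenProj F (-ν)) =
      (Complex.exp (t * ν) * sinhcSqrt (-G.det)) • (eigenProj F ν * G * eigenProj F (-ν)) := by
  have hFF : F * F = ν ^ 2 • 1 := by rw [hν]; exact mul_self_eq_neg_det_smul_one_of_trace_eq_zero hF
  have hPQ := eigenProj_mul_eigenProj_neg hFF hν0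
  have hPFQ : eigenProj F ν * F * eigenProj F (-ν) = 0 := by
    rw [eigenProj_mul_self hFF hν0, smul_mul_assoc, hPQ, smul_zero]
  have h := congrArg (fun X => eigenProj F ν * X * eigenProj F (-ν)) (H t)
  rwa [exp_smul_add_of_trace_eq_zero hF hG, mul_smul_one_add_smul_mul_of_mul_eq_zero hPQ,
    mul_add, add_mul, mul_smul_comm, smul_mul_assoc, hPFQ, smul_zero, zero_add, ← mul_assoc,
    eigenProj_mul_exp_smul hFF hν0, smul_mul_assoc, smul_mul_assoc, exp_of_trace_eq_zero hG,
    mul_smul_one_add_smul_mul_of_mul_eq_zero hPQ, smul_smul] at h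

theorem det_eq_zero_of_forall_exp_smul_add (hF : F.trace = 0) (hG : G.trace = 0)
    (H : ∀ t : ℂ, exp (t • F + G) = exp (t • F) * exp G) (hFG : ¬ Commute F G) : F.det = 0 := by
  by_contra hdet
  obtain ⟨μ, hμ⟩ := IsAlgClosed.exists_pow_nat_eq (-F.det) two_pos
  have hμ0 : μ ≠ 0 := by rintro rfl; exact hdet (by simpa using hμ.symm)
  have hq := surjective_quadratic (neg_ne_zero.mpr hdet) (F * G).trace (-G.det)
  simp only [← sub_eq_add_neg] at hq
  have hcompression : eigenProj F μ * G * eigenProj F (-μ) ≠ 0 ∨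
      eigenProj F (-μ) * G * eigenProj F (-(-μ)) ≠ 0 := by
    rw [neg_neg, ← not_and_or]
    rintro ⟨h₁, h₂⟩
    exact hFG (sub_eq_zero.mp (by rw [commutator_eq_eigenProj hμ0 G, h₁, h₂, sub_zero, smul_zero]))
  rcases hcompression with hX | hX
  · exact not_forall_sinhcSqrt_comp_eq_exp_mul hq μ _ fun t =>
      smul_left_injective ℂ hX (sinhcSqrt_smul_eigenProj_mul_mul_eigenProj_neg hF hG H hμ hμ0 t)
  · exact not_forall_sinhcSqrt_comp_eq_exp_mul hq (-μ) _ fun t =>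
      smul_left_injective ℂ hX
        (sinhcSqrt_smul_eigenProj_mul_mul_eigenProj_neg hF hG H (by rwa [neg_sq])
          (neg_ne_zero.mpr hμ0) t)

theorem trace_mul_eq_zero_of_det_eq_zero (hF : F.trace = 0) (hG : G.trace = 0)
    (H : ∀ t : ℂ, exp (t • F + G) = exp (t • F) * exp G) (hdet : F.det = 0) :
    (F * G).trace = 0 := by
  have htrace : ∀ t, 2 * coshSqrt ((F * G).trace * t - G.det) =
      2 * coshSqrt (-G.det) + sinhcSqrt (-G.det) * (F * G).trace * t := by
    intro t
    have h := congrArg trace (H t)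
    rw [exp_smul_add_of_trace_eq_zero hF hG, exp_smul_mul_exp_of_det_eq_zero hF hG hdet] at h
    simp only [trace_add, trace_smul, trace_one, Fintype.card_fin, hF, hG, hdet, smul_eq_mul]
      at h
    rw [neg_zero, zero_mul, zero_add] at h
    linear_combination h
  by_contra hw
  refine not_forall_coshSqrt_eq_affine (coshSqrt (-G.det) + sinhcSqrt (-G.det) * G.det / 2)
    (sinhcSqrt (-G.det) / 2) fun z => ?_
  have h := htrace ((z + G.det) / (F * G).trace)
  rw [mul_div_cancel₀ _ hw, add_sub_cancel_right, mul_assoc, mul_div_cancel₀ _ hw] at h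
  linear_combination h / 2

theorem exists_mul_eq_smul_of_det_eq_zero (hF : F.trace = 0) (hG : G.trace = 0)
    (H : ∀ t : ℂ, exp (t • F + G) = exp (t • F) * exp G) (hFG : ¬ Commute F G) (hdet : F.det = 0) :
    ∃ κ : ℂ, F * G = κ • F ∧
      κ * sinhcSqrt (-G.det) = sinhcSqrt (-G.det) - coshSqrt (-G.det) := by
  have hF0 := left_ne_zero_of_not_commute hFG
  have hw := trace_mul_eq_zero_of_det_eq_zero hF hG H hdet
  have hsF : sinhcSqrt (-G.det) • F =
      coshSqrt (-G.det) • F + sinhcSqrt (-G.det) • (F * G) := by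
    have h := H 1
    rw [exp_smul_add_of_trace_eq_zero hF hG, exp_smul_mul_exp_of_det_eq_zero hF hG hdet, hdet,
      hw] at h
    rw [show -0 * (1 : ℂ) ^ 2 + 0 * 1 - G.det = -G.det by ring] at h
    linear_combination (norm := module) h
  have hs : sinhcSqrt (-G.det) ≠ 0 := by
    intro hs
    rw [hs, zero_smul, zero_smul, add_zero, eq_comm, smul_eq_zero] at hsF
    have h := coshSqrt_sq_sub_mul_sinhcSqrt_sq (-G.det)
    rw [hsF.resolve_right hF0, hs] at h
    norm_num at h
  refine ⟨(sinhcSqrt (-G.det) - coshSqrt (-G.det)) / sinhcSqrt (-G.det), ?_, div_mul_cancel₀ _ hs⟩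
  refine smul_right_injective _ hs ?_
  simp only [smul_smul, mul_div_cancel₀ _ hs, sub_smul]
  rw [hsF]
  abel

theorem mul_self_eq_zero_and_exists_of_forall_exp_smul_add (hF : F.trace = 0) (hG : G.trace = 0)
    (H : ∀ t : ℂ, exp (t • F + G) = exp (t • F) * exp G) (hFG : ¬ Commute F G) :
    F * F = 0 ∧ ∃ κ : ℂ, κ ≠ 0 ∧ F * G = κ • F ∧ Complex.exp (-(2 * κ)) = 1 - 2 * κ := by
  have hF0 := left_ne_zero_of_not_commute hFG
  have hdet := det_eq_zero_of_forall_exp_smul_add hF hG H hFG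
  obtain ⟨κ, hFG', hκ⟩ := exists_mul_eq_smul_of_det_eq_zero hF hG H hFG hdet
  have hGF : G * F = -κ • F := by
    have hanti := mul_add_mul_fin_two F G
    rw [hF, hG, trace_mul_eq_zero_of_det_eq_zero hF hG H hdet, hFG'] at hanti
    simp only [zero_smul, mul_zero, sub_zero, add_zero] at hanti
    rw [neg_smul, eq_neg_iff_add_eq_zero, add_comm, hanti]
  have hκ0 : κ ≠ 0 := by
    rintro rfl
    exact hFG (by rw [Commute, SemiconjBy, hFG', hGF, neg_zero])
  have hκsq : κ ^ 2 = -G.det := by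
    refine smul_left_injective ℂ hF0 ?_
    calc κ ^ 2 • F = F * G * G := by rw [hFG', smul_mul_assoc, hFG', smul_smul, sq]
      _ = -G.det • F := by
        rw [mul_assoc, mul_self_eq_neg_det_smul_one_of_trace_eq_zero hG, mul_smul_comm, mul_one]
  refine ⟨by rw [mul_self_eq_neg_det_smul_one_of_trace_eq_zero hF, hdet, neg_zero, zero_smul],
    κ, hκ0, hFG', exp_neg_two_mul_of_mul_sinhcSqrt_sq ?_⟩
  rwa [hκsq]

end Traceless

end Matrix

theorem stmt_16 (f g : Matrix (Fin 2) (Fin 2) ℂ)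
    (hne : f * g ≠ g * f)
    (h : ∀ t : ℂ, exp (t • f + g) = exp (t • f) * exp g) :
    ∃ σ τ : ℂ,
      let f' := f - σ • (1 : Matrix (Fin 2) (Fin 2) ℂ)
      let g' := g - τ • (1 : Matrix (Fin 2) (Fin 2) ℂ)
      f' ≠ 0 ∧ f' ^ 2 = 0 ∧ f' * g' = 0 ∧
      g'.trace ≠ 0 ∧ Complex.exp g'.trace = 1 + g'.trace := by
  set F := f - (f.trace / 2) • 1
  set G := g - (g.trace / 2) • 1
  have hFG : ¬ Commute F G := by
    intro hc
    have := (hc.add_right ((Commute.one_right F).smul_right (g.trace / 2))).add_left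
      ((Commute.one_left _).smul_left (f.trace / 2))
    rw [sub_add_cancel, sub_add_cancel] at this
    exact hne this
  have H : ∀ t : ℂ, exp (t • F + G) = exp (t • F) * exp G :=
    exp_smul_add_eq_of_add_smul_one (a := f.trace / 2) (b := g.trace / 2) (by simpa [F, G] using h)
  obtain ⟨hFF, κ, hκ, hFGκ, hexp⟩ := mul_self_eq_zero_and_exists_of_forall_exp_smul_add
    (trace_sub_half_trace_smul_one f) (trace_sub_half_trace_smul_one g) H hFG
  have hg' : g - (κ + g.trace / 2) • 1 = G - κ • 1 := by simp only [G, add_smul]; abel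
  have htr : (G - κ • 1).trace = -(2 * κ) := by
    rw [trace_sub, trace_sub_half_trace_smul_one, trace_smul, trace_one, Fintype.card_fin]
    simp only [smul_eq_mul]; push_cast; ring
  refine ⟨f.trace / 2, κ + g.trace / 2, ?_⟩
  simp only [hg', htr]
  exact ⟨left_ne_zero_of_not_commute hFG, by rw [sq, hFF],
    by rw [mul_sub, hFGκ, mul_smul_comm, mul_one, sub_self], by simpa using hκ,
    by rw [hexp, sub_eq_add_neg]⟩
end

section
/- Let A, B be n×n complex matrices such that the commutator AB − BA has rank 1. Then A and B are simultaneously triangularizable. -/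
/-!
Laffey's argument, for endomorphisms `f`, `g` with `rank [f, g] ≤ 1`: they have a common
eigenvector. Let `μ` be an eigenvalue of `f`. If `g` preserves the `μ`-eigenspace of `f`,
an eigenvector of `g` there is a common eigenvector. Otherwise some eigenvector `x` has
`[f, g] x ≠ 0`; since `[f, g] x = (f - μ) (g x)` and `[f, g]` has rank one, the range of `[f, g]`
lies in `range (f - μ)`, and then `g (f - μ) = (f - μ) g - [f, g]` shows that this proper subspace
is invariant under `f` and `g`, so we recurse into it. Applied to the transposes, this yields a
common eigenfunctional, i.e. a common invariant hyperplane; recursing into the hyperplane and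
completing its triangularizing basis by one vector gives the triangularizing basis.
-/

open Module Submodule

namespace Module.Basis

lemma blockTriangular_toMatrix_iff {ι R M : Type*} [Fintype ι] [LinearOrder ι] [CommSemiring R]
    [AddCommMonoid M] [Module R M] (b : Basis ι R M) (f : End R M) :
    (LinearMap.toMatrix b b f).BlockTriangular id ↔ ∀ j, f (b j) ∈ span R (b '' Set.Iic j) := by
  simp only [Matrix.BlockTriangular, id, LinearMap.toMatrix_apply, b.mem_span_image,
    Set.subset_def, Finset.mem_coe, Finsupp.mem_support_iff, Set.mem_Iic]
  exact ⟨fun h j i hne => not_lt.mp fun hji => hne (h hji),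
    fun h i j hji => by_contra fun hne => (h j i hne).not_gt hji⟩

variable {K V : Type*} [Field K] [AddCommGroup V] [Module K V] {n : ℕ}

lemma exists_snoc_of_finrank_add_one {W : Submodule K V} (hW : finrank K W + 1 = finrank K V)
    (b' : Basis (Fin n) K W) : ∃ b : Basis (Fin (n + 1)) K V, ∀ i, b i.castSucc = b' i := by
  obtain ⟨x, -, hx⟩ := SetLike.exists_of_lt (lt_top_iff_ne_top.mpr fun h => by
    rw [h, finrank_top] at hW; omega : W < ⊤)
  have hli : LinearIndependent K (Fin.snoc (W.subtype ∘ b') x) := by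
    refine linearIndependent_finSnoc.mpr ⟨b'.linearIndependent.map' _ W.ker_subtype, ?_⟩
    rwa [Set.range_comp, span_image, b'.span_eq, Submodule.map_top, range_subtype]
  have hcard : Fintype.card (Fin (n + 1)) = finrank K V := by
    rw [← hW, finrank_eq_card_basis b', Fintype.card_fin, Fintype.card_fin]
  exact ⟨basisOfLinearIndependentOfCardEqFinrank hli hcard, fun i => by simp⟩

lemma blockTriangular_toMatrix_of_restrict {W : Submodule K V} {b' : Basis (Fin n) K W}
    {b : Basis (Fin (n + 1)) K V} (hb : ∀ i, b i.castSucc = b' i) {f : End K V}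
    (hf : ∀ x ∈ W, f x ∈ W) (h : (LinearMap.toMatrix b' b' (f.restrict hf)).BlockTriangular id) :
    (LinearMap.toMatrix b b f).BlockTriangular id := by
  rw [blockTriangular_toMatrix_iff] at h ⊢
  intro j
  induction j using Fin.lastCases with
  | last =>
    rw [show Set.Iic (Fin.last n) = Set.univ from Set.eq_univ_of_forall Fin.le_last,
      Set.image_univ, b.span_eq]
    exact mem_top
  | cast j =>
    have hj := apply_mem_span_image_of_mem_span W.subtype (h j)
    rw [← Set.image_comp] at hj
    rw [hb]
    refine span_mono ?_ hj
    rintro _ ⟨i, hi, rfl⟩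
    exact ⟨i.castSucc, Fin.castSucc_le_castSucc_iff.mpr hi, hb i⟩

end Module.Basis

namespace Module.End

open LinearMap hiding id

variable {K V : Type*} [Field K] [AddCommGroup V] [Module K V]

lemma mapsTo_range_sub_smul {f g : End K V} {μ : K}
    (h : range (f * g - g * f) ≤ range (f - μ • 1)) :
    ∀ y ∈ range (f - μ • 1), g y ∈ range (f - μ • 1) := by
  rintro _ ⟨z, rfl⟩
  have : g ((f - μ • 1) z) = (f - μ • 1) (g z) - (f * g - g * f) z := by
    simp only [LinearMap.sub_apply, LinearMap.smul_apply, one_apply, mul_apply, map_sub,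
      map_smul]
    abel
  rw [this]
  exact sub_mem (mem_range_self _ _) (h (mem_range_self _ _))

variable [FiniteDimensional K V]

lemma finrank_range_commutator_restrict_le {f g : End K V}
    {W : Submodule K V} (hf : ∀ x ∈ W, f x ∈ W) (hg : ∀ x ∈ W, g x ∈ W) :
    finrank K (range (f.restrict hf * g.restrict hg - g.restrict hg * f.restrict hf)) ≤
      finrank K (range (f * g - g * f)) := by
  have hcomm : W.subtype ∘ₗ (f.restrict hf * g.restrict hg - g.restrict hg * f.restrict hf) =
      (f * g - g * f) ∘ₗ W.subtype := by
    ext; simp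
  rw [← finrank_map_subtype_eq, ← range_comp, hcomm]
  exact finrank_mono (range_comp_le_range _ _)

lemma range_commutator_le_range_sub_smul {f g : End K V} {μ : K} {x : V} (hx : f x = μ • x)
    (hcx : (f * g - g * f) x ≠ 0) (h : finrank K (range (f * g - g * f)) ≤ 1) :
    range (f * g - g * f) ≤ range (f - μ • 1) := by
  have hcx_mem : (f * g - g * f) x ∈ range (f - μ • 1) := ⟨g x, by simp [hx]⟩
  have hspan : range (f * g - g * f) = K ∙ (f * g - g * f) x :=
    (eq_of_le_of_finrank_le ((span_singleton_le_iff_mem _ _).mpr (mem_range_self _ x))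
      (by rwa [finrank_span_singleton hcx])).symm
  rwa [hspan, span_singleton_le_iff_mem]

variable [IsAlgClosed K]

lemma exists_common_eigenvector_of_mapsTo_eigenspace {f g : End K V} {μ : K}
    (hμ : f.HasEigenvalue μ) (hg : ∀ x ∈ f.eigenspace μ, g x ∈ f.eigenspace μ) :
    ∃ v : V, v ≠ 0 ∧ ∃ μ ν : K, f v = μ • v ∧ g v = ν • v := by
  obtain ⟨x, hx⟩ := hμ.exists_hasEigenvector
  have : Nontrivial (f.eigenspace μ) := ⟨⟨⟨x, hx.1⟩, 0, by simpa using hx.2⟩⟩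
  obtain ⟨ν, hν⟩ := exists_eigenvalue (g.restrict hg)
  obtain ⟨w, hw⟩ := hν.exists_hasEigenvector
  refine ⟨w, by simpa using hw.2, μ, ν, mem_eigenspace_iff.mp w.2, ?_⟩
  simpa [Subtype.ext_iff] using mem_eigenspace_iff.mp hw.1

theorem exists_common_eigenvector [Nontrivial V] (f g : End K V)
    (h : finrank K (range (f * g - g * f)) ≤ 1) :
    ∃ v : V, v ≠ 0 ∧ ∃ μ ν : K, f v = μ • v ∧ g v = ν • v := by
  induction hn : finrank K V using Nat.strong_induction_on generalizing V with
  | _ n ih =>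
  obtain ⟨μ, hμ⟩ := exists_eigenvalue f
  by_cases hc : ∀ x ∈ f.eigenspace μ, (f * g - g * f) x = 0
  · refine exists_common_eigenvector_of_mapsTo_eigenspace hμ fun x hx => ?_
    have hfx : f x = μ • x := mem_eigenspace_iff.mp hx
    have := hc x hx
    simp only [LinearMap.sub_apply, mul_apply, hfx, map_smul, sub_eq_zero] at this
    exact mem_eigenspace_iff.mpr this
  push Not at hc
  obtain ⟨x, hx, hcx⟩ := hc
  have hfx : f x = μ • x := mem_eigenspace_iff.mp hx
  set W := range (f - μ • 1)
  have hcW : range (f * g - g * f) ≤ W := range_commutator_le_range_sub_smul hfx hcx h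
  have hfW : ∀ y ∈ W, f y ∈ W := by
    rintro _ ⟨z, rfl⟩
    exact ⟨f z, by simp⟩
  have hgW : ∀ y ∈ W, g y ∈ W := mapsTo_range_sub_smul hcW
  have hWV : finrank K W < n := by
    have hx0 : x ≠ 0 := fun h0 => hcx (by rw [h0, map_zero])
    refine hn ▸ finrank_lt fun hW => hx0 (injective_iff_surjective.mpr (range_eq_top.mp hW) ?_)
    simp [hfx]
  have : Nontrivial W := ⟨⟨⟨_, hcW (mem_range_self _ x)⟩, 0, by simpa using hcx⟩⟩
  obtain ⟨w, hw, μ', ν', hfw, hgw⟩ := ih _ hWV (f.restrict hfW) (g.restrict hgW)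
    ((finrank_range_commutator_restrict_le hfW hgW).trans h) rfl
  exact ⟨w, by simpa using hw, μ', ν', by simpa [Subtype.ext_iff] using hfw,
    by simpa [Subtype.ext_iff] using hgw⟩

theorem exists_common_invariant_hyperplane [Nontrivial V] (f g : End K V)
    (h : finrank K (range (f * g - g * f)) ≤ 1) :
    ∃ W : Submodule K V, finrank K W + 1 = finrank K V ∧
      (∀ x ∈ W, f x ∈ W) ∧ (∀ x ∈ W, g x ∈ W) := by
  have hdual : g.dualMap * f.dualMap - f.dualMap * g.dualMap = (f * g - g * f).dualMap := by
    ext φ x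
    simp
  obtain ⟨φ, hφ, ν, μ, hgφ, hfφ⟩ := exists_common_eigenvector g.dualMap f.dualMap
    (by rwa [hdual, finrank_range_dualMap_eq_finrank_range])
  refine ⟨ker φ, Dual.finrank_ker_add_one_of_ne_zero hφ, fun x hx => ?_, fun x hx => ?_⟩
  · simpa [mem_ker.mp hx] using LinearMap.congr_fun hfφ x
  · simpa [mem_ker.mp hx] using LinearMap.congr_fun hgφ x

theorem exists_basis_blockTriangular_toMatrix {n : ℕ} (hn : finrank K V = n) (f g : End K V)
    (h : finrank K (range (f * g - g * f)) ≤ 1) :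
    ∃ b : Basis (Fin n) K V, (LinearMap.toMatrix b b f).BlockTriangular id ∧
      (LinearMap.toMatrix b b g).BlockTriangular id := by
  induction n generalizing V with
  | zero => exact ⟨finBasisOfFinrankEq K V hn, fun i => i.elim0, fun i => i.elim0⟩
  | succ n ih =>
    have := nontrivial_of_finrank_eq_succ hn
    obtain ⟨W, hW, hfW, hgW⟩ := exists_common_invariant_hyperplane f g h
    obtain ⟨b', hfb', hgb'⟩ := ih (by omega) (f.restrict hfW) (g.restrict hgW)
      ((finrank_range_commutator_restrict_le hfW hgW).trans h)
    obtain ⟨b, hb⟩ := Basis.exists_snoc_of_finrank_add_one hW b'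
    exact ⟨b, Basis.blockTriangular_toMatrix_of_restrict hb hfW hfb',
      Basis.blockTriangular_toMatrix_of_restrict hb hgW hgb'⟩

end Module.End

theorem LinearMap.toMatrix_toLin'_eq_inv_mul_mul {ι K : Type*} [Fintype ι] [DecidableEq ι]
    [Field K] (b : Basis ι K (ι → K)) (A : Matrix ι ι K) :
    LinearMap.toMatrix b b (Matrix.toLin' A) =
      ((Pi.basisFun K ι).toMatrix b)⁻¹ * A * (Pi.basisFun K ι).toMatrix b := by
  rw [Matrix.inv_eq_left_inv (b.toMatrix_mul_toMatrix_flip (Pi.basisFun K ι)),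
    ← basis_toMatrix_mul_linearMap_toMatrix_mul_basis_toMatrix b (Pi.basisFun K ι) b
      (Pi.basisFun K ι),
    LinearMap.toMatrix_eq_toMatrix', LinearMap.toMatrix'_toLin']

open Matrix

theorem stmt_18 {n : ℕ} (A B : Matrix (Fin n) (Fin n) ℂ)
    (h : (A * B - B * A).rank = 1) :
    ∃ P : Matrix (Fin n) (Fin n) ℂ, IsUnit P ∧
      (P⁻¹ * A * P).BlockTriangular id ∧ (P⁻¹ * B * P).BlockTriangular id := by
  have hrank : finrank ℂ (LinearMap.range (toLin' A * toLin' B - toLin' B * toLin' A)) ≤ 1 := by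
    rw [← h, Matrix.rank, ← Matrix.toLin'_apply', map_sub, Matrix.toLin'_mul, Matrix.toLin'_mul]
    rfl
  obtain ⟨b, hA, hB⟩ := Module.End.exists_basis_blockTriangular_toMatrix
    (Module.finrank_fin_fun ℂ) _ _ hrank
  let := (Pi.basisFun ℂ (Fin n)).invertibleToMatrix b
  refine ⟨(Pi.basisFun ℂ (Fin n)).toMatrix b, isUnit_of_invertible _, ?_, ?_⟩
  · rwa [← LinearMap.toMatrix_toLin'_eq_inv_mul_mul]
  · rwa [← LinearMap.toMatrix_toLin'_eq_inv_mul_mul]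
end

section
/- Let m₁, m₂, n₁, n₂ be integers with m₁ ≠ m₂, n₁ ≠ n₂, and m₁ + m₂ ≠ n₁ + n₂. If for every positive integer n the quantity (m₁ + m₂ − n₁ − n₂)²n² + 2((m₁ + m₂)(n₁ + n₂) − m₁² − m₂² − 2n₁n₂)n + (m₁ − m₂)² is a perfect square, then (m₁ − n₁)(m₁ − n₂)(m₂ − n₁)(m₂ − n₂) = 0. -/
lemma aux_sq_all (a B C : ℤ) (ha : a ≠ 0)
    (h : ∀ n : ℕ, 0 < n → ∃ k : ℤ, a^2 * (n : ℤ)^2 + B * (n : ℤ) + C = k^2) :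
    B^2 = 4 * a^2 * C := by
  set D : ℤ := 4 * a^2 * C - B^2 with hD
  have ha2 : 1 ≤ a^2 := by
    have := sq_pos_of_ne_zero ha
    omega
  set N : ℕ := (|D| + |B| + 1).toNat with hNdef
  have hNnn : (0:ℤ) ≤ |D| + |B| + 1 := by positivity
  have hNcast : (N : ℤ) = |D| + |B| + 1 := Int.toNat_of_nonneg hNnn
  have hNpos : 0 < N := by
    have := abs_nonneg D
    have := abs_nonneg B
    omega
  obtain ⟨k, hk⟩ := h N hNpos
  set Y : ℤ := 2 * a^2 * (N : ℤ) + B with hYdef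
  have hYbig : |D| < Y := by
    have h1 : -|B| ≤ B := neg_abs_le B
    have h2 : (0:ℤ) ≤ |D| := abs_nonneg D
    have h3 : (0:ℤ) ≤ |B| := abs_nonneg B
    nlinarith [hNcast]
  set X : ℤ := |2 * a * k| with hXdef
  have hX0 : 0 ≤ X := abs_nonneg _
  have hXsq : X^2 = (2*a*k)^2 := sq_abs _
  have key : X^2 - Y^2 = D := by
    rw [hXsq]
    linear_combination (-4) * a^2 * hk
  have hDle : D ≤ |D| := le_abs_self D
  have hDge : -|D| ≤ D := neg_abs_le D
  have hXY : X = Y := by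
    rcases lt_trichotomy X Y with hlt | heq | hgt
    · exfalso
      have h1 : Y ≤ (Y - X) * (Y + X) := by nlinarith
      nlinarith
    · exact heq
    · exfalso
      have h1 : Y ≤ (X - Y) * (X + Y) := by nlinarith
      nlinarith
  have : D = 0 := by rw [← key, hXY]; ring
  linarith [this]

theorem stmt_19 (m₁ m₂ n₁ n₂ : ℤ) (hm : m₁ ≠ m₂) (hn : n₁ ≠ n₂)
    (hs : m₁ + m₂ ≠ n₁ + n₂)
    (hsq : ∀ n : ℕ, 0 < n → ∃ k : ℤ,
      (m₁ + m₂ - n₁ - n₂)^2 * (n : ℤ)^2 +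
        2 * ((m₁ + m₂) * (n₁ + n₂) - m₁^2 - m₂^2 - 2 * n₁ * n₂) * (n : ℤ) +
        (m₁ - m₂)^2 = k^2) :
    (m₁ - n₁) * (m₁ - n₂) * (m₂ - n₁) * (m₂ - n₂) = 0 := by
  have ha : m₁ + m₂ - n₁ - n₂ ≠ 0 := fun h => hs (by linarith)
  have hB2 := aux_sq_all (m₁ + m₂ - n₁ - n₂)
      (2 * ((m₁ + m₂) * (n₁ + n₂) - m₁^2 - m₂^2 - 2 * n₁ * n₂))
      ((m₁ - m₂)^2) ha (fun n hn => by
        obtain ⟨k, hk⟩ := hsq n hn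
        exact ⟨k, by linear_combination hk⟩)
  have h16 : (16:ℤ) * ((m₁ - n₁) * (m₁ - n₂) * (m₂ - n₁) * (m₂ - n₂)) = 0 := by
    linear_combination hB2
  rcases mul_eq_zero.mp h16 with h | h
  · norm_num at h
  · exact h
end
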